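/- arXiv:1606.06705 — 6 statements merged into one kernel-verified Lean document; each statement's English description precedes it below -/
import Mathlib

section
/- For any weight v on (0,∞) and nonnegative measurable f, the greatest non-increasing minorant v↓(x) = ess inf_{0<t≤x} v(t) satisfies: inf over all nonnegative measurable g with ∫_{(0,x]} g dμ ≥ ∫_{(0,x]} f dμ for all x > 0, of ∫ g v dμ, equals ∫ f v↓ dμ. -/
/-!
Lower bound: `v↓ ≤ v` almost everywhere on `(0, ∞)`, and since `v↓` is non-increasing the
layer-cake formula writes `∫ f v↓` as an integral over `s` of the `f`-mass of the initial segments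
`{v↓ > s}` of `(0, ∞)`; for every Hardy majorant `g` of `f` these are dominated by the `g`-masses.

Upper bound: fix `a < 1` and cover `(0, ∞)` by countably many disjoint cells `D`, each lying to the
right of a point `c` with `a v↓(c) ≤ v↓` on `D`. The `f`-mass of `D` can be moved into a set in
`(0, c]` where `v` is barely above `v↓(c)` without breaking `Hg ≥ Hf`, at cost about
`v↓(c) ∫_D f ≤ a⁻¹ ∫_D f v↓`; when `v↓(c) = 0` infinitely many unit masses of summably small cost
do the job even if `∫_D f = ∞`. The infimum is countably subadditive in `f`, so summing over the
cells and letting `a → 1` gives `inf ≤ ∫ f v↓`.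
-/

open MeasureTheory ENNReal Set Filter

section Order

variable {α : Type*} [LinearOrder α] [TopologicalSpace α] [OrderClosedTopology α]
  [SecondCountableTopology α]

theorem exists_countable_subset_isCoinitialFor (s : Set α) :
    ∃ t ⊆ s, t.Countable ∧ IsCoinitialFor s t := by
  obtain ⟨d, hd_count, hd_dense⟩ := TopologicalSpace.exists_countable_dense s
  refine ⟨(↑) '' d ∪ {x ∈ s | ∀ z ∈ s, x ≤ z}, ?_, (hd_count.image _).union ?_, ?_⟩
  · rintro _ (⟨z, -, rfl⟩ | ⟨hx, -⟩)
    exacts [z.2, hx]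
  · exact Set.Subsingleton.countable fun x hx y hy => le_antisymm (hx.2 y hy.1) (hy.2 x hx.1)
  intro x hx
  by_cases hmin : ∀ z ∈ s, x ≤ z
  · exact ⟨x, Or.inr ⟨hx, hmin⟩, le_rfl⟩
  push Not at hmin
  obtain ⟨z, hz, hzx⟩ := hmin
  obtain ⟨w, hwd, hwx⟩ := hd_dense.exists_mem_open (isOpen_Iio.preimage continuous_subtype_val)
    ⟨⟨z, hz⟩, hzx⟩
  exact ⟨w, Or.inl ⟨w, hwd, rfl⟩, le_of_lt hwx⟩

theorem exists_countable_subset_isCofinalFor (s : Set α) :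
    ∃ t ⊆ s, t.Countable ∧ IsCofinalFor s t :=
  exists_countable_subset_isCoinitialFor (α := αᵒᵈ) s

end Order

theorem exists_countable_biUnion_Ioc_eq {A : Set ℝ} (hA : ∀ x ∈ A, Ioc 0 x ⊆ A)
    (hA0 : A ⊆ Ioi 0) : ∃ C ⊆ A, C.Countable ∧ A = ⋃ c ∈ C, Ioc 0 c := by
  obtain ⟨C, hCA, hC, hcof⟩ := exists_countable_subset_isCofinalFor A
  refine ⟨C, hCA, hC, subset_antisymm (fun x hx => ?_) (iUnion₂_subset fun c hc => hA c (hCA hc))⟩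
  obtain ⟨c, hc, hxc⟩ := hcof hx
  exact mem_biUnion hc ⟨hA0 hx, hxc⟩

theorem ENNReal.exists_countable_forall_mul_le_le {a : ℝ≥0∞} (ha : a < 1) :
    ∃ Q : Set ℝ≥0∞, Q.Countable ∧ ∀ w, ∃ q ∈ Q, a * q ≤ w ∧ w ≤ q := by
  obtain ⟨d, hd, hdd⟩ := TopologicalSpace.exists_countable_dense ℝ≥0∞
  refine ⟨insert 0 (insert ⊤ d), (hd.insert ⊤).insert 0, fun w => ?_⟩
  rcases eq_or_ne w 0 with rfl | hw0
  · exact ⟨0, mem_insert _ _, by simp, le_rfl⟩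
  rcases eq_or_ne w ⊤ with rfl | hwt
  · exact ⟨⊤, mem_insert_of_mem _ (mem_insert _ _), le_top, le_rfl⟩
  have hat : a ≠ ⊤ := ha.ne_top
  have hw : w < w / a := (ENNReal.lt_div_iff_mul_lt (Or.inr hwt) (Or.inl hat)).2 <| by
    simpa [mul_comm] using ENNReal.mul_lt_mul_left hw0 hwt ha
  obtain ⟨q, hqd, hwq, hqa⟩ := hdd.exists_between hw
  refine ⟨q, mem_insert_of_mem _ (mem_insert_of_mem _ hqd), ?_, hwq.le⟩
  rw [mul_comm]
  exact ((ENNReal.lt_div_iff_mul_lt (Or.inr hqa.ne_top) (Or.inl hat)).1 hqa).le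

theorem exists_countable_forall_exists_le_mul_le (W : ℝ → ℝ≥0∞) {a : ℝ≥0∞} (ha : a < 1)
    (S : Set ℝ) : ∃ C ⊆ S, C.Countable ∧ ∀ t ∈ S, ∃ c ∈ C, c ≤ t ∧ a * W c ≤ W t := by
  obtain ⟨Q, hQ, hQcover⟩ := ENNReal.exists_countable_forall_mul_le_le ha
  choose C hCS hC hcoin using fun q : ℝ≥0∞ =>
    exists_countable_subset_isCoinitialFor (S ∩ W ⁻¹' Icc (a * q) q)
  refine ⟨⋃ q ∈ Q, C q, iUnion₂_subset fun q _ => (hCS q).trans inter_subset_left,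
    hQ.biUnion fun q _ => hC q, fun t ht => ?_⟩
  obtain ⟨q, hq, hqt, htq⟩ := hQcover (W t)
  obtain ⟨c, hc, hct⟩ := hcoin q ⟨ht, hqt, htq⟩
  refine ⟨c, mem_biUnion hq hc, hct, le_trans ?_ hqt⟩
  gcongr
  exact (hCS q hc).2.2

theorem volume_Ioi_inter_ofReal_lt (a : ℝ≥0∞) :
    volume (Ioi 0 ∩ {s : ℝ | ENNReal.ofReal s < a}) = a := by
  rcases eq_or_ne a ⊤ with rfl | ha
  · simp [ENNReal.ofReal_lt_top]
  · have : Ioi 0 ∩ {s : ℝ | ENNReal.ofReal s < a} = Ioo 0 a.toReal := by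
      ext s
      simp +contextual [ENNReal.ofReal_lt_iff_lt_toReal, le_of_lt, ha]
    rw [this, Real.volume_Ioo, sub_zero, ENNReal.ofReal_toReal ha]

theorem lintegral_eq_lintegral_measure_ofReal_lt {β : Type*} [MeasurableSpace β]
    (ν : Measure β) [SFinite ν] {φ : β → ℝ≥0∞} (hφ : Measurable φ) :
    ∫⁻ x, φ x ∂ν = ∫⁻ s in Ioi 0, ν {x | ENNReal.ofReal s < φ x} := by
  have hK : MeasurableSet {p : β × ℝ | ENNReal.ofReal p.2 < φ p.1} :=
    measurableSet_lt (ENNReal.measurable_ofReal.comp measurable_snd) (hφ.comp measurable_fst)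
  calc ∫⁻ x, φ x ∂ν
      = ∫⁻ x, volume.restrict (Ioi 0) (Prod.mk x ⁻¹' {p | ENNReal.ofReal p.2 < φ p.1}) ∂ν := by
        congr with x
        rw [Measure.restrict_apply' measurableSet_Ioi, inter_comm]
        exact (volume_Ioi_inter_ofReal_lt _).symm
    _ = ∫⁻ s in Ioi 0, ν {x | ENNReal.ofReal s < φ x} := by
        rw [← Measure.prod_apply hK, Measure.prod_apply_symm hK]
        rfl

noncomputable def hardy (μ : Measure ℝ) (f : ℝ → ℝ≥0∞) (x : ℝ) : ℝ≥0∞ :=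
  ∫⁻ t in Ioc 0 x, f t ∂μ

theorem setLIntegral_le_of_hardy_le {μ : Measure ℝ} {f g : ℝ → ℝ≥0∞}
    (hfg : ∀ x > 0, hardy μ f x ≤ hardy μ g x) {A : Set ℝ} (hA : ∀ x ∈ A, Ioc 0 x ⊆ A)
    (hA0 : A ⊆ Ioi 0) : ∫⁻ t in A, f t ∂μ ≤ ∫⁻ t in A, g t ∂μ := by
  obtain ⟨C, hCA, hC, rfl⟩ := exists_countable_biUnion_Ioc_eq hA hA0
  have : Countable C := hC.to_subtype
  have hdir : Directed (· ⊆ ·) fun c : C => Ioc (0 : ℝ) c :=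
    Monotone.directed_le fun _ _ h => Ioc_subset_Ioc_right h
  rw [biUnion_eq_iUnion, setLIntegral_iUnion_of_directed _ hdir,
    setLIntegral_iUnion_of_directed _ hdir]
  exact iSup_mono fun c => hfg c (hA0 (hCA c.2))

theorem lintegral_mul_le_of_hardy_le {μ : Measure ℝ} [SFinite μ] {f g φ : ℝ → ℝ≥0∞}
    (hf : Measurable f) (hg : Measurable g) (hφ : Antitone φ)
    (hfg : ∀ x > 0, hardy μ f x ≤ hardy μ g x) :
    ∫⁻ t in Ioi 0, f t * φ t ∂μ ≤ ∫⁻ t in Ioi 0, g t * φ t ∂μ := by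
  have hφm : Measurable φ := hφ.measurable
  have layer : ∀ h : ℝ → ℝ≥0∞, Measurable h → ∫⁻ t in Ioi 0, h t * φ t ∂μ
      = ∫⁻ s in Ioi 0, ∫⁻ t in Ioi 0 ∩ {t | ENNReal.ofReal s < φ t}, h t ∂μ := fun h hh => by
    rw [← Pi.mul_def, ← lintegral_withDensity_eq_lintegral_mul _ hh hφm,
      lintegral_eq_lintegral_measure_ofReal_lt _ hφm]
    congr with s
    rw [withDensity_apply _ (measurableSet_lt measurable_const hφm),
      Measure.restrict_restrict (measurableSet_lt measurable_const hφm), inter_comm]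
  rw [layer f hf, layer g hg]
  refine lintegral_mono fun s => setLIntegral_le_of_hardy_le hfg ?_ inter_subset_left
  exact fun x hx y hy => ⟨hy.1, hx.2.trans_le (hφ hy.2)⟩

/-- The paper's `v↓`. -/
noncomputable def decreasingMinorant (μ : Measure ℝ) (v : ℝ → ℝ≥0∞) (x : ℝ) : ℝ≥0∞ :=
  essInf v (μ.restrict (Ioc 0 x))

theorem decreasingMinorant_antitone (μ : Measure ℝ) (v : ℝ → ℝ≥0∞) :
    Antitone (decreasingMinorant μ v) := fun _ _ h =>
  essInf_antitone_measure
    (Measure.restrict_mono (Ioc_subset_Ioc_right h) le_rfl).absolutelyContinuous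

theorem measure_lt_inter_Ioc_eq_zero_of_lt_decreasingMinorant {μ : Measure ℝ} {v : ℝ → ℝ≥0∞}
    {r : ℝ≥0∞} {x : ℝ} (hr : r < decreasingMinorant μ v x) : μ ({t | v t < r} ∩ Ioc 0 x) = 0 := by
  have h : ∀ᵐ t ∂μ.restrict (Ioc 0 x), decreasingMinorant μ v x ≤ v t := ae_essInf_le
  rw [ae_iff, Measure.restrict_apply' measurableSet_Ioc] at h
  refine measure_mono_null (fun t ht => ?_) h
  exact ⟨fun h' => ht.1.not_ge (hr.le.trans h'), ht.2⟩

theorem ae_decreasingMinorant_le (μ : Measure ℝ) (v : ℝ → ℝ≥0∞) :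
    ∀ᵐ t ∂μ.restrict (Ioi 0), decreasingMinorant μ v t ≤ v t := by
  set W := decreasingMinorant μ v
  have hnull : ∀ r : ℝ≥0∞, μ ({t | v t < r} ∩ {t | 0 < t ∧ r < W t}) = 0 := by
    intro r
    obtain ⟨C, hCA, hC, hAC⟩ := exists_countable_biUnion_Ioc_eq (A := {t | 0 < t ∧ r < W t})
      (fun x hx y hy => ⟨hy.1, hx.2.trans_le (decreasingMinorant_antitone μ v hy.2)⟩)
      (fun x hx => hx.1)
    rw [hAC, inter_iUnion₂]
    exact (measure_biUnion_null_iff hC).2 fun c hc =>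
      measure_lt_inter_Ioc_eq_zero_of_lt_decreasingMinorant (hCA hc).2
  rw [ae_restrict_iff' measurableSet_Ioi]
  filter_upwards [measure_eq_zero_iff_ae_notMem.1
    (measure_iUnion_null fun q : ℚ => hnull (Real.toNNReal q))] with t ht ht0
  by_contra! hlt
  obtain ⟨q, -, hvq, hqW⟩ := ENNReal.lt_iff_exists_rat_btwn.1 hlt
  exact ht (mem_iUnion.2 ⟨q, hvq, ht0, hqW⟩)

noncomputable def hardyCost (μ : Measure ℝ) (v f : ℝ → ℝ≥0∞) : ℝ≥0∞ :=
  ⨅ (g : ℝ → ℝ≥0∞) (_ : Measurable g) (_ : ∀ x > (0 : ℝ), hardy μ f x ≤ hardy μ g x),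
    ∫⁻ t in Ioi 0, g t * v t ∂μ

section HardyCost

variable {μ : Measure ℝ} {v f : ℝ → ℝ≥0∞}

theorem hardyCost_le {g : ℝ → ℝ≥0∞} (hg : Measurable g)
    (hfg : ∀ x > 0, hardy μ f x ≤ hardy μ g x) :
    hardyCost μ v f ≤ ∫⁻ t in Ioi 0, g t * v t ∂μ :=
  iInf₂_le_of_le g hg (iInf_le _ hfg)

theorem exists_lintegral_lt_of_hardyCost_lt {c : ℝ≥0∞} (h : hardyCost μ v f < c) :
    ∃ g, Measurable g ∧ (∀ x > 0, hardy μ f x ≤ hardy μ g x) ∧ ∫⁻ t in Ioi 0, g t * v t ∂μ < c := by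
  simpa only [hardyCost, iInf_lt_iff, exists_prop] using h

theorem lintegral_mul_decreasingMinorant_le_hardyCost [SFinite μ] (hf : Measurable f) :
    ∫⁻ t in Ioi 0, f t * decreasingMinorant μ v t ∂μ ≤ hardyCost μ v f :=
  le_iInf₂ fun g hg => le_iInf fun hfg => calc
    _ ≤ ∫⁻ t in Ioi 0, g t * decreasingMinorant μ v t ∂μ :=
      lintegral_mul_le_of_hardy_le hf hg (decreasingMinorant_antitone μ v) hfg
    _ ≤ ∫⁻ t in Ioi 0, g t * v t ∂μ := lintegral_mono_ae <| by
      filter_upwards [ae_decreasingMinorant_le μ v] with t ht using by gcongr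

theorem hardyCost_mono {f' : ℝ → ℝ≥0∞} (h : ∀ t > 0, f t ≤ f' t) :
    hardyCost μ v f ≤ hardyCost μ v f' :=
  le_iInf₂ fun _ hg => le_iInf fun hfg => hardyCost_le hg fun x hx =>
    (setLIntegral_mono' measurableSet_Ioc fun t ht => h t ht.1).trans (hfg x hx)

theorem hardy_tsum {ι : Type*} [Countable ι] {F : ι → ℝ → ℝ≥0∞} (hF : ∀ i, Measurable (F i))
    (x : ℝ) : hardy μ (fun t => ∑' i, F i t) x = ∑' i, hardy μ (F i) x :=
  lintegral_tsum fun i => (hF i).aemeasurable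

theorem lintegral_tsum_mul (hv : Measurable v) {ι : Type*} [Countable ι] {g : ι → ℝ → ℝ≥0∞}
    (hg : ∀ i, Measurable (g i)) :
    ∫⁻ t in Ioi 0, (∑' i, g i t) * v t ∂μ = ∑' i, ∫⁻ t in Ioi 0, g i t * v t ∂μ := by
  simp_rw [← ENNReal.tsum_mul_right]
  exact lintegral_tsum fun i => ((hg i).mul hv).aemeasurable

theorem hardyCost_tsum_le (hv : Measurable v) {ι : Type*} [Countable ι] {F : ι → ℝ → ℝ≥0∞}
    (hF : ∀ i, Measurable (F i)) :
    hardyCost μ v (fun t => ∑' i, F i t) ≤ ∑' i, hardyCost μ v (F i) := by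
  refine ENNReal.le_of_forall_pos_le_add fun ε hε hlt => ?_
  obtain ⟨δ, hδ, hδε⟩ := ENNReal.exists_pos_sum_of_countable (ENNReal.coe_ne_zero.2 hε.ne') ι
  have hfin : ∀ i, hardyCost μ v (F i) < hardyCost μ v (F i) + δ i := fun i =>
    ENNReal.lt_add_right (ne_top_of_le_ne_top hlt.ne (ENNReal.le_tsum i))
      (ENNReal.coe_ne_zero.2 (hδ i).ne')
  choose g hg hFg hcost using fun i => exists_lintegral_lt_of_hardyCost_lt (hfin i)
  calc hardyCost μ v (fun t => ∑' i, F i t)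
      ≤ ∫⁻ t in Ioi 0, (∑' i, g i t) * v t ∂μ := by
        refine hardyCost_le (Measurable.tsum hg) fun x hx => ?_
        rw [hardy_tsum hF, hardy_tsum hg]
        exact ENNReal.tsum_le_tsum fun i => hFg i x hx
    _ = ∑' i, ∫⁻ t in Ioi 0, g i t * v t ∂μ := lintegral_tsum_mul hv hg
    _ ≤ ∑' i, (hardyCost μ v (F i) + δ i) := ENNReal.tsum_le_tsum fun i => (hcost i).le
    _ ≤ ∑' i, hardyCost μ v (F i) + ε := by
        rw [ENNReal.tsum_add]
        exact add_le_add_right hδε.le _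

end HardyCost

section Cells

variable {μ : Measure ℝ} {v f : ℝ → ℝ≥0∞}

theorem exists_subset_Ioc_lt_of_decreasingMinorant_lt [SigmaFinite μ] (hv : Measurable v)
    {p : ℝ} {r : ℝ≥0∞} (hr : decreasingMinorant μ v p < r) :
    ∃ B ⊆ Ioc 0 p, MeasurableSet B ∧ 0 < μ B ∧ μ B < ⊤ ∧ ∀ t ∈ B, v t < r := by
  have hpos : 0 < μ ({t | v t < r} ∩ Ioc 0 p) := by
    refine pos_iff_ne_zero.2 fun h0 => hr.not_ge (le_essInf_of_ae_le r ?_)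
    rw [EventuallyLE, ae_iff, Measure.restrict_apply' measurableSet_Ioc]
    simpa only [not_le] using h0
  obtain ⟨B, hBm, hBsub, hBpos, hBfin⟩ :=
    Measure.exists_subset_measure_lt_top ((measurableSet_lt hv measurable_const).inter
      measurableSet_Ioc) hpos
  exact ⟨B, fun t ht => (hBsub ht).2, hBm, hBpos, hBfin, fun t ht => (hBsub ht).1⟩

/-- Spreading mass `m` uniformly over a set in `(0, p]` where `v < r`. -/
theorem exists_hardy_bump [SigmaFinite μ] (hv : Measurable v) {p : ℝ} {r : ℝ≥0∞}
    (hr : decreasingMinorant μ v p < r) (m : ℝ≥0∞) :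
    ∃ g, Measurable g ∧ (∀ x ≥ p, m ≤ hardy μ g x) ∧ ∫⁻ t in Ioi 0, g t * v t ∂μ ≤ m * r := by
  obtain ⟨B, hBp, hBm, hBpos, hBfin, hvB⟩ := exists_subset_Ioc_lt_of_decreasingMinorant_lt hv hr
  refine ⟨B.indicator fun _ => m / μ B, measurable_const.indicator hBm, fun x hx => ?_, ?_⟩
  · rw [hardy, lintegral_indicator_const hBm, Measure.restrict_apply hBm,
      inter_eq_self_of_subset_left (hBp.trans (Ioc_subset_Ioc_right hx)),
      ENNReal.div_mul_cancel hBpos.ne' hBfin.ne]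
  · calc ∫⁻ t in Ioi 0, B.indicator (fun _ => m / μ B) t * v t ∂μ
        ≤ ∫⁻ t, B.indicator (fun _ => m / μ B * r) t ∂μ := by
          refine setLIntegral_le_lintegral _ _ |>.trans (lintegral_mono fun t => ?_)
          by_cases ht : t ∈ B
          · simp only [indicator_of_mem ht]
            gcongr
            exact (hvB t ht).le
          · simp [indicator_of_notMem ht]
      _ = m * r := by
        rw [lintegral_indicator_const hBm, mul_right_comm,
          ENNReal.div_mul_cancel hBpos.ne' hBfin.ne]

theorem hardy_indicator_le {g : ℝ → ℝ≥0∞} {D : Set ℝ} (hDm : MeasurableSet D) {p : ℝ}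
    (hD : D ⊆ Ici p) (hg : ∀ x ≥ p, ∫⁻ t in D, f t ∂μ ≤ hardy μ g x) (x : ℝ) :
    hardy μ (D.indicator f) x ≤ hardy μ g x := by
  rcases lt_or_ge x p with hx | hx
  · have h0 : hardy μ (D.indicator f) x = 0 := by
      refine (setLIntegral_congr_fun measurableSet_Ioc fun t ht => ?_).trans lintegral_zero
      exact indicator_of_notMem (fun htD => (hD htD).not_gt (ht.2.trans_lt hx)) f
    exact h0 ▸ zero_le
  · calc hardy μ (D.indicator f) x ≤ ∫⁻ t, D.indicator f t ∂μ := setLIntegral_le_lintegral _ _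
      _ = ∫⁻ t in D, f t ∂μ := lintegral_indicator hDm f
      _ ≤ hardy μ g x := hg x hx

theorem hardyCost_indicator_le_mul_of_lt [SigmaFinite μ] (hv : Measurable v) {D : Set ℝ}
    (hDm : MeasurableSet D) {p : ℝ} (hD : D ⊆ Ici p) {r : ℝ≥0∞}
    (hr : decreasingMinorant μ v p < r) :
    hardyCost μ v (D.indicator f) ≤ (∫⁻ t in D, f t ∂μ) * r := by
  obtain ⟨g, hg, hgm, hcost⟩ := exists_hardy_bump hv hr (∫⁻ t in D, f t ∂μ)
  exact (hardyCost_le hg fun x _ => hardy_indicator_le hDm hD hgm x).trans hcost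

/-- Countably many unit bumps of summably small cost: their total mass `∞` dominates `∫_D f`,
whatever it is. -/
theorem hardyCost_indicator_eq_zero [SigmaFinite μ] (hv : Measurable v) {D : Set ℝ}
    (hDm : MeasurableSet D) {p : ℝ} (hD : D ⊆ Ici p) (hp : decreasingMinorant μ v p = 0) :
    hardyCost μ v (D.indicator f) = 0 := by
  refine le_antisymm (ENNReal.le_of_forall_pos_le_add fun ε hε _ => ?_) zero_le
  obtain ⟨δ, hδ, hδε⟩ := ENNReal.exists_pos_sum_of_countable (coe_ne_zero.2 hε.ne') ℕ
  choose g hg hgm hcost using fun n =>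
    exists_hardy_bump hv (hp.trans_lt (coe_pos.2 (hδ n))) 1
  calc hardyCost μ v (D.indicator f) ≤ ∫⁻ t in Ioi 0, (∑' n, g n t) * v t ∂μ := by
        refine hardyCost_le (Measurable.tsum hg) fun x _ => hardy_indicator_le hDm hD ?_ x
        intro x hx
        calc ∫⁻ t in D, f t ∂μ ≤ ∑' _ : ℕ, 1 := by
              rw [ENNReal.tsum_const_eq_top_of_ne_zero one_ne_zero]; exact le_top
          _ ≤ hardy μ (fun t => ∑' n, g n t) x := by
              rw [hardy_tsum hg]; exact ENNReal.tsum_le_tsum fun n => hgm n x hx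
    _ = ∑' n, ∫⁻ t in Ioi 0, g n t * v t ∂μ := lintegral_tsum_mul hv hg
    _ ≤ ∑' n, (δ n : ℝ≥0∞) := ENNReal.tsum_le_tsum fun n => (hcost n).trans (one_mul _).le
    _ ≤ 0 + ε := by rw [zero_add]; exact hδε.le

theorem hardyCost_indicator_le_mul_top (hf : Measurable f) {D : Set ℝ} (hDm : MeasurableSet D) :
    hardyCost μ v (D.indicator f) ≤ (∫⁻ t in D, f t ∂μ) * ⊤ := calc
  hardyCost μ v (D.indicator f) ≤ ∫⁻ t in Ioi 0, D.indicator f t * v t ∂μ :=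
    hardyCost_le (hf.indicator hDm) fun _ _ => le_rfl
  _ ≤ ∫⁻ t, D.indicator (fun t => f t * ⊤) t ∂μ :=
    setLIntegral_le_lintegral _ _ |>.trans <| lintegral_mono fun t => by
      by_cases ht : t ∈ D
      · simp only [indicator_of_mem ht]
        gcongr
        exact le_top
      · simp [indicator_of_notMem ht]
  _ = (∫⁻ t in D, f t ∂μ) * ⊤ := by rw [lintegral_indicator hDm, lintegral_mul_const _ hf]

theorem hardyCost_indicator_le [SigmaFinite μ] (hv : Measurable v) (hf : Measurable f)
    {D : Set ℝ} (hDm : MeasurableSet D) {p : ℝ} (hD : D ⊆ Ici p) :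
    hardyCost μ v (D.indicator f) ≤ (∫⁻ t in D, f t ∂μ) * decreasingMinorant μ v p := by
  set m := ∫⁻ t in D, f t ∂μ
  set w := decreasingMinorant μ v p
  by_cases hmw : m = 0 ∨ w = ⊤
  · refine (hardyCost_indicator_le_mul_top hf hDm).trans ?_
    change m * ⊤ ≤ m * w
    rcases hmw with hm | hw
    · simp [hm]
    · simp [hw]
  push Not at hmw
  rcases eq_or_ne w 0 with hw0 | hw0
  · simp [hardyCost_indicator_eq_zero hv hDm hD hw0]
  rcases eq_or_ne m ⊤ with hmt | hmt
  · simp [hmt, hw0]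
  refine le_of_forall_gt_imp_ge_of_dense fun b hb => ?_
  have hwb : w < b / m :=
    (ENNReal.lt_div_iff_mul_lt (Or.inl hmw.1) (Or.inl hmt)).2 (by rwa [mul_comm])
  exact (hardyCost_indicator_le_mul_of_lt hv hDm hD hwb).trans_eq (ENNReal.mul_div_cancel hmw.1 hmt)

end Cells

section Cover

variable {μ : Measure ℝ} {v f : ℝ → ℝ≥0∞}

theorem mul_hardyCost_indicator_le [SigmaFinite μ] (hv : Measurable v) (hf : Measurable f)
    {D : Set ℝ} (hDm : MeasurableSet D) {a : ℝ≥0∞} {p : ℝ}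
    (hD : D ⊆ {t | p ≤ t ∧ a * decreasingMinorant μ v p ≤ decreasingMinorant μ v t}) :
    a * hardyCost μ v (D.indicator f) ≤ ∫⁻ t in D, f t * decreasingMinorant μ v t ∂μ := calc
  a * hardyCost μ v (D.indicator f)
      ≤ a * ((∫⁻ t in D, f t ∂μ) * decreasingMinorant μ v p) := by
        gcongr
        exact hardyCost_indicator_le hv hf hDm fun t ht => (hD ht).1
  _ = ∫⁻ t in D, f t * (a * decreasingMinorant μ v p) ∂μ := by
        rw [lintegral_mul_const _ hf]
        ring
  _ ≤ ∫⁻ t in D, f t * decreasingMinorant μ v t ∂μ :=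
        setLIntegral_mono (hf.mul (decreasingMinorant_antitone μ v).measurable) fun t ht => by
          gcongr
          exact (hD ht).2

theorem mul_hardyCost_le [SigmaFinite μ] (hv : Measurable v) (hf : Measurable f) {a : ℝ≥0∞}
    (ha : a < 1) : a * hardyCost μ v f ≤ ∫⁻ t in Ioi 0, f t * decreasingMinorant μ v t ∂μ := by
  set W := decreasingMinorant μ v
  have hWm : Measurable W := (decreasingMinorant_antitone μ v).measurable
  obtain ⟨C, -, hC, hcover⟩ := exists_countable_forall_exists_le_mul_le W ha (Ioi 0)
  obtain ⟨c, rfl⟩ := hC.exists_eq_range <| (hcover 1 (mem_Ioi.2 one_pos)).elim fun c hc => ⟨c, hc.1⟩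
  set A : ℕ → Set ℝ := fun k => Ioi 0 ∩ {t | c k ≤ t ∧ a * W (c k) ≤ W t}
  have hAm : ∀ k, MeasurableSet (A k) := fun k =>
    measurableSet_Ioi.inter (measurableSet_Ici.inter (measurableSet_le measurable_const hWm))
  have hDm : ∀ k, MeasurableSet (disjointed A k) := MeasurableSet.disjointed hAm
  have hDA : ∀ k, disjointed A k ⊆ A k := disjointed_subset A
  have hcovD : ∀ t > 0, f t ≤ ∑' k, (disjointed A k).indicator f t := by
    intro t ht
    obtain ⟨_, ⟨k, rfl⟩, hkt, hkW⟩ := hcover t ht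
    have : t ∈ ⋃ k, disjointed A k := by
      rw [iUnion_disjointed]
      exact mem_iUnion.2 ⟨k, ht, hkt, hkW⟩
    obtain ⟨j, hj⟩ := mem_iUnion.1 this
    exact (indicator_of_mem hj f).symm.le.trans (ENNReal.le_tsum j)
  calc a * hardyCost μ v f ≤ a * ∑' k, hardyCost μ v ((disjointed A k).indicator f) := by
        gcongr
        exact (hardyCost_mono hcovD).trans (hardyCost_tsum_le hv fun k => hf.indicator (hDm k))
    _ ≤ ∑' k, ∫⁻ t in disjointed A k, f t * W t ∂μ := by
        rw [← ENNReal.tsum_mul_left]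
        exact ENNReal.tsum_le_tsum fun k =>
          mul_hardyCost_indicator_le hv hf (hDm k) fun t ht => (hDA k ht).2
    _ = ∫⁻ t in ⋃ k, disjointed A k, f t * W t ∂μ :=
        (lintegral_iUnion hDm (disjoint_disjointed A) _).symm
    _ ≤ ∫⁻ t in Ioi 0, f t * W t ∂μ :=
        lintegral_mono_set (iUnion_subset fun k => (hDA k).trans inter_subset_left)

end Cover

/-- Sinnamon's level-function identity for the Hardy operator:
the infimum of `∫ g v dμ` over all nonnegative measurable `g` with
`Hg ≥ Hf` equals `∫ f v↓ dμ`, where `v↓(x) = ess inf_{0<t≤x} v(t)`. -/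
theorem inf_over_Hardy_majorants_eq_lintegral_decreasing_minorant
    (μ : Measure ℝ) [SigmaFinite μ] (v f : ℝ → ℝ≥0∞)
    (hv : Measurable v) (hf : Measurable f) :
    (⨅ (g : ℝ → ℝ≥0∞) (_ : Measurable g)
        (_ : ∀ x > (0 : ℝ), (∫⁻ t in Set.Ioc 0 x, f t ∂μ) ≤ ∫⁻ t in Set.Ioc 0 x, g t ∂μ),
        ∫⁻ t in Set.Ioi (0 : ℝ), g t * v t ∂μ)
      = ∫⁻ t in Set.Ioi (0 : ℝ), f t * essInf v (μ.restrict (Set.Ioc 0 t)) ∂μ :=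
  le_antisymm
    (ENNReal.le_of_forall_lt_one_mul_le fun _ ha => mul_hardyCost_le hv hf ha)
    (lintegral_mul_decreasingMinorant_le_hardyCost hf)
end

section
/- For any weight v on (0,∞) and nonnegative measurable f, the greatest non-decreasing minorant v↑(x) = ess inf_{x≤t<∞} v(t) satisfies: inf over all nonnegative measurable g with ∫_{[x,∞)} g dμ ≥ ∫_{[x,∞)} f dμ for all x > 0, of ∫ g v dμ, equals ∫ f v↑ dμ. -/
/-!
Mass of `f` at `t` may be moved anywhere to the right of `t` without decreasing `H*f` on
`(0, ∞)`. If `v↑(t) < β`, the set `{v < β} ∩ [t, ∞)` has positive measure, so moving the mass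
there costs at most `β` per unit. Cutting `(0, ∞)` along the level sets
`{a ^ k ≤ v↑ < a ^ (k + 1)}` and gluing with countable subadditivity of the infimum bounds it by
`a ∫ f v↑` for every `a > 1`; on `{v↑ = 0}` the cost of every piece of finite measure is zero.

Conversely `v↑ ≤ v` almost everywhere, and by the layer-cake formula `∫ g v↑` integrates over
`λ > 0` the `g`-masses of the superlevel sets `{v↑ > λ}`. These are upper sets, hence countable
increasing unions of rays `[s, ∞)`, on which the `g`-mass dominates the `f`-mass by assumption.
-/

open MeasureTheory ENNReal Set Filter Topology

def IsCopsonMajorant (μ : Measure ℝ) (f g : ℝ → ℝ≥0∞) : Prop :=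
  ∀ x > (0 : ℝ), ∫⁻ t in Ici x, f t ∂μ ≤ ∫⁻ t in Ici x, g t ∂μ

noncomputable def copsonCost (μ : Measure ℝ) (v f : ℝ → ℝ≥0∞) : ℝ≥0∞ :=
  ⨅ (g : ℝ → ℝ≥0∞) (_ : Measurable g) (_ : IsCopsonMajorant μ f g),
    ∫⁻ t in Ioi (0 : ℝ), g t * v t ∂μ

noncomputable def increasingMinorant (μ : Measure ℝ) (v : ℝ → ℝ≥0∞) (t : ℝ) : ℝ≥0∞ :=
  essInf v (μ.restrict (Ici t))

theorem ENNReal.le_mul_of_forall_gt_le_mul {x y c : ℝ≥0∞} (hc : c ≠ ∞) (hy : y ≠ ∞ ∨ c ≠ 0)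
    (h : ∀ a, c < a → a ≠ ∞ → x ≤ a * y) : x ≤ c * y := by
  have : (𝓝[>] c).NeBot := nhdsGT_neBot_of_exists_gt ⟨∞, hc.lt_top⟩
  refine ge_of_tendsto ((ENNReal.continuousAt_mul_const hy).mono_left
    (nhdsWithin_le_nhds (s := Ioi c))) ?_
  filter_upwards [self_mem_nhdsWithin, nhdsWithin_le_nhds (gt_mem_nhds hc.lt_top)]
    with a hca hat using h a hca hat.ne

theorem volume_setOf_ofReal_lt_inter_Ioi (c : ℝ≥0∞) :
    volume ({l : ℝ | ENNReal.ofReal l < c} ∩ Ioi 0) = c := by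
  rcases eq_or_ne c ∞ with rfl | hc
  · simp [Real.volume_Ioi]
  have : {l : ℝ | ENNReal.ofReal l < c} ∩ Ioi 0 = Ioo 0 c.toReal := by
    ext l
    simp only [mem_inter_iff, mem_ofPred_eq, mem_Ioi, mem_Ioo]
    exact ⟨fun h => ⟨h.2, (ofReal_lt_iff_lt_toReal h.2.le hc).1 h.1⟩,
      fun h => ⟨(ofReal_lt_iff_lt_toReal h.1.le hc).2 h.2, h.1⟩⟩
  rw [this, Real.volume_Ioo, sub_zero, ofReal_toReal hc]

theorem lintegral_eq_lintegral_Ioi_measure_ofReal_lt {α : Type*} [MeasurableSpace α]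
    (ν : Measure α) [SFinite ν] {w : α → ℝ≥0∞} (hw : Measurable w) :
    ∫⁻ x, w x ∂ν = ∫⁻ l in Ioi (0 : ℝ), ν {x | ENNReal.ofReal l < w x} := by
  have hmeas : MeasurableSet {p : α × ℝ | ENNReal.ofReal p.2 < w p.1} :=
    measurableSet_lt (measurable_ofReal.comp measurable_snd) (hw.comp measurable_fst)
  calc ∫⁻ x, w x ∂ν
      = ∫⁻ x, (∫⁻ l in Ioi (0 : ℝ), {l : ℝ | ENNReal.ofReal l < w x}.indicator 1 l) ∂ν := by
        refine lintegral_congr fun x => ?_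
        rw [lintegral_indicator_one (measurableSet_lt measurable_ofReal measurable_const),
          Measure.restrict_apply (measurableSet_lt measurable_ofReal measurable_const),
          volume_setOf_ofReal_lt_inter_Ioi]
    _ = ∫⁻ l in Ioi (0 : ℝ), ∫⁻ x, {x | ENNReal.ofReal l < w x}.indicator 1 x ∂ν :=
        lintegral_lintegral_swap (f := fun x l => {l : ℝ | ENNReal.ofReal l < w x}.indicator 1 l)
          (measurable_one.indicator hmeas).aemeasurable
    _ = ∫⁻ l in Ioi (0 : ℝ), ν {x | ENNReal.ofReal l < w x} :=
        lintegral_congr fun l => lintegral_indicator_one (measurableSet_lt measurable_const hw)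

theorem IsUpperSet.measure_le_of_forall_Ici_le {ν₁ ν₂ : Measure ℝ} {U : Set ℝ}
    (hU : IsUpperSet U) (h : ∀ s ∈ U, ν₁ (Ici s) ≤ ν₂ (Ici s)) : ν₁ U ≤ ν₂ U := by
  by_cases hmin : ∃ m ∈ U, ∀ t ∈ U, m ≤ t
  · obtain ⟨m, hm, hmin⟩ := hmin
    rw [Subset.antisymm hmin fun t ht => hU ht hm]
    exact h m hm
  push Not at hmin
  have hU_eq : U = ⋃ r : {r : ℚ // (r : ℝ) ∈ U}, Ici ((r : ℚ) : ℝ) := by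
    ext t
    simp only [mem_iUnion, mem_Ici, Subtype.exists, exists_prop]
    refine ⟨fun ht => ?_, fun ⟨r, hr, hrt⟩ => hU hrt hr⟩
    obtain ⟨s, hs, hst⟩ := hmin t ht
    obtain ⟨r, hsr, hrt⟩ := exists_rat_btwn hst
    exact ⟨r, hU hsr.le hs, hrt.le⟩
  have hdir : Directed (· ⊆ ·) fun r : {r : ℚ // (r : ℝ) ∈ U} => Ici ((r : ℚ) : ℝ) :=
    Antitone.directed_le fun r r' hrr' => Ici_subset_Ici.2 (by exact_mod_cast hrr')
  rw [hU_eq, hdir.measure_iUnion, hdir.measure_iUnion]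
  exact iSup_mono fun r => h r r.2

theorem exists_rat_gt_measure_inter_Ici_ne_zero {μ : Measure ℝ} {F : Set ℝ} {t : ℝ}
    (h : μ (F ∩ Ioi t) ≠ 0) : ∃ q : ℚ, t < q ∧ μ (F ∩ Ici (q : ℝ)) ≠ 0 := by
  by_contra! hq
  refine h (measure_mono_null ?_ (measure_iUnion_null fun q : {q : ℚ // t < q} => hq q q.2))
  rintro s ⟨hsF, hts⟩
  obtain ⟨q, htq, hqs⟩ := exists_rat_btwn (mem_Ioi.1 hts)
  exact mem_iUnion.2 ⟨⟨q, htq⟩, hsF, hqs.le⟩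

theorem measure_setOf_lt_eq_zero_iff_le_essInf {α : Type*} [MeasurableSpace α]
    {ν : Measure α} {u : α → ℝ≥0∞} {β : ℝ≥0∞} : ν {x | u x < β} = 0 ↔ β ≤ essInf u ν :=
  ⟨fun h0 => le_essInf_of_ae_le β <| ae_iff.2 <| by simpa only [not_le] using h0,
    fun h => measure_mono_null (fun _ hx => (hx.trans_le h).not_ge) (ae_iff.1 ae_essInf_le)⟩

section IncreasingMinorant

variable (μ : Measure ℝ) (v : ℝ → ℝ≥0∞)

theorem increasingMinorant_mono : Monotone (increasingMinorant μ v) := fun _ _ hst =>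
  essInf_antitone_measure <| Measure.absolutelyContinuous_of_le <|
    Measure.restrict_mono (Ici_subset_Ici.2 hst) le_rfl

theorem measurable_increasingMinorant : Measurable (increasingMinorant μ v) :=
  (increasingMinorant_mono μ v).measurable

variable {μ v}

theorem measure_setOf_lt_inter_Ici_eq_zero_iff {t : ℝ} {β : ℝ≥0∞} :
    μ ({s | v s < β} ∩ Ici t) = 0 ↔ β ≤ increasingMinorant μ v t := by
  rw [← Measure.restrict_apply' measurableSet_Ici]
  exact measure_setOf_lt_eq_zero_iff_le_essInf

theorem increasingMinorant_ae_le (hv : Measurable v) :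
    ∀ᵐ t ∂μ, increasingMinorant μ v t ≤ v t := by
  have hnull : ∀ c, μ ({t | c ≤ increasingMinorant μ v t} ∩ {t | v t < c}) = 0 := fun c => by
    have hU : IsUpperSet {t | c ≤ increasingMinorant μ v t} := fun s t hst hs =>
      hs.trans (increasingMinorant_mono μ v hst)
    rw [← Measure.restrict_apply' (show MeasurableSet {t | v t < c} from hv measurableSet_Iio)]
    refine nonpos_iff_eq_zero.1 (hU.measure_le_of_forall_Ici_le (ν₂ := 0) fun s hs => ?_)
    rw [Measure.restrict_apply measurableSet_Ici, inter_comm,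
      measure_setOf_lt_inter_Ici_eq_zero_iff.2 hs]
    exact zero_le
  refine ae_iff.2 (measure_mono_null (fun t ht => ?_)
    (measure_iUnion_null fun q : ℚ => hnull ((q : ℝ).toNNReal)))
  obtain ⟨q, -, hvq, hqW⟩ := ENNReal.lt_iff_exists_rat_btwn.1 (not_le.1 ht)
  exact mem_iUnion.2 ⟨q, hqW.le, hvq⟩

end IncreasingMinorant

section CopsonCost

variable {μ : Measure ℝ} {v f g : ℝ → ℝ≥0∞}

theorem IsCopsonMajorant.lintegral_le_of_isUpperSet (hfg : IsCopsonMajorant μ f g) {U : Set ℝ}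
    (hU : IsUpperSet U) (hUm : MeasurableSet U) :
    ∫⁻ t in U ∩ Ioi 0, f t ∂μ ≤ ∫⁻ t in U ∩ Ioi 0, g t ∂μ := by
  rw [← withDensity_apply _ (hUm.inter measurableSet_Ioi),
    ← withDensity_apply _ (hUm.inter measurableSet_Ioi)]
  refine (hU.inter (isUpperSet_Ioi 0)).measure_le_of_forall_Ici_le fun s hs => ?_
  rw [withDensity_apply _ measurableSet_Ici, withDensity_apply _ measurableSet_Ici]
  exact hfg s hs.2

theorem lintegral_mul_increasingMinorant_le [SFinite μ] (hf : Measurable f) (hg : Measurable g)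
    (hfg : IsCopsonMajorant μ f g) :
    ∫⁻ t in Ioi 0, f t * increasingMinorant μ v t ∂μ
      ≤ ∫⁻ t in Ioi 0, g t * increasingMinorant μ v t ∂μ := by
  have hW := measurable_increasingMinorant μ v
  have hlayer : ∀ h : ℝ → ℝ≥0∞, Measurable h →
      ∫⁻ t in Ioi 0, h t * increasingMinorant μ v t ∂μ
        = ∫⁻ l in Ioi (0 : ℝ), ∫⁻ t in {t | ENNReal.ofReal l < increasingMinorant μ v t} ∩ Ioi 0,
            h t ∂μ := fun h hh => by
    refine (setLIntegral_withDensity_eq_setLIntegral_mul μ hh hW measurableSet_Ioi).symm.trans ?_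
    rw [lintegral_eq_lintegral_Ioi_measure_ofReal_lt _ hW]
    refine lintegral_congr fun l => ?_
    rw [Measure.restrict_apply (measurableSet_lt measurable_const hW),
      withDensity_apply _ ((measurableSet_lt measurable_const hW).inter measurableSet_Ioi)]
  rw [hlayer f hf, hlayer g hg]
  exact lintegral_mono fun l => hfg.lintegral_le_of_isUpperSet
    (fun s t hst hs => hs.trans_le (increasingMinorant_mono μ v hst))
    (measurableSet_lt measurable_const hW)

theorem copsonCost_le (hg : Measurable g) (hfg : IsCopsonMajorant μ f g) :
    copsonCost μ v f ≤ ∫⁻ t in Ioi 0, g t * v t ∂μ :=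
  iInf_le_of_le g <| iInf_le_of_le hg <| iInf_le _ hfg

theorem exists_isCopsonMajorant_lt {c : ℝ≥0∞} (h : copsonCost μ v f < c) :
    ∃ g, Measurable g ∧ IsCopsonMajorant μ f g ∧ ∫⁻ t in Ioi 0, g t * v t ∂μ < c := by
  simpa only [copsonCost, iInf_lt_iff, exists_prop] using h

theorem lintegral_mul_increasingMinorant_le_copsonCost [SFinite μ] (hv : Measurable v)
    (hf : Measurable f) :
    ∫⁻ t in Ioi 0, f t * increasingMinorant μ v t ∂μ ≤ copsonCost μ v f :=
  le_iInf₂ fun _ hg => le_iInf fun hfg => (lintegral_mul_increasingMinorant_le hf hg hfg).trans <|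
    lintegral_mono_ae <| (ae_restrict_of_ae (increasingMinorant_ae_le hv)).mono fun _ ht =>
      mul_le_mul_right ht _

theorem copsonCost_mono {f' : ℝ → ℝ≥0∞} (hff' : f ≤ f') : copsonCost μ v f ≤ copsonCost μ v f' :=
  le_iInf₂ fun _ hg => le_iInf fun hfg =>
    copsonCost_le hg fun x hx => (lintegral_mono fun t => hff' t).trans (hfg x hx)

theorem copsonCost_indicator_Ioi (f : ℝ → ℝ≥0∞) :
    copsonCost μ v ((Ioi 0).indicator f) = copsonCost μ v f := by
  have : ∀ g, IsCopsonMajorant μ ((Ioi 0).indicator f) g ↔ IsCopsonMajorant μ f g :=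
    fun g => forall₂_congr fun x hx => by
      rw [setLIntegral_indicator measurableSet_Ioi, inter_eq_right.2 (Ici_subset_Ioi.2 hx)]
  simp only [copsonCost, this]

theorem copsonCost_tsum_le {ι : Type*} [Countable ι] (hv : Measurable v) {f : ι → ℝ → ℝ≥0∞}
    (hf : ∀ i, Measurable (f i)) :
    copsonCost μ v (fun t => ∑' i, f i t) ≤ ∑' i, copsonCost μ v (f i) := by
  refine ENNReal.le_of_forall_pos_le_add fun ε hε hfin => ?_
  obtain ⟨δ, hδ, hδε⟩ := ENNReal.exists_pos_sum_of_countable (coe_ne_zero.2 hε.ne') ι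
  have hlt : ∀ i, copsonCost μ v (f i) < copsonCost μ v (f i) + δ i := fun i =>
    ENNReal.lt_add_right (ne_top_of_le_ne_top hfin.ne (ENNReal.le_tsum i))
      (coe_ne_zero.2 (hδ i).ne')
  choose g hg hfg hcost using fun i => exists_isCopsonMajorant_lt (hlt i)
  calc copsonCost μ v (fun t => ∑' i, f i t)
      ≤ ∫⁻ t in Ioi 0, (∑' i, g i t) * v t ∂μ :=
        copsonCost_le (Measurable.tsum hg) fun x hx => by
          rw [lintegral_tsum fun i => (hf i).aemeasurable,
            lintegral_tsum fun i => (hg i).aemeasurable]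
          exact ENNReal.tsum_le_tsum fun i => hfg i x hx
    _ = ∑' i, ∫⁻ t in Ioi 0, g i t * v t ∂μ := by
        simp_rw [← ENNReal.tsum_mul_right]
        exact lintegral_tsum fun i => ((hg i).mul hv).aemeasurable
    _ ≤ ∑' i, (copsonCost μ v (f i) + δ i) := ENNReal.tsum_le_tsum fun i => (hcost i).le
    _ ≤ ∑' i, copsonCost μ v (f i) + ε := by
        rw [ENNReal.tsum_add]
        exact add_le_add le_rfl hδε.le

theorem copsonCost_indicator_le_of_subset_sUnion (hv : Measurable v) (hf : Measurable f)
    {w : ℝ → ℝ≥0∞} {E : Set ℝ} {pieces : Set (Set ℝ)} (hpieces : pieces.Countable)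
    (hpiecesm : ∀ P ∈ pieces, MeasurableSet P) (hE : MeasurableSet E) (hEpieces : E ⊆ ⋃₀ pieces)
    (hpiece : ∀ P ∈ pieces, ∀ D ⊆ P, MeasurableSet D →
      copsonCost μ v (D.indicator f) ≤ ∫⁻ t in D, f t * w t ∂μ) :
    copsonCost μ v (E.indicator f) ≤ ∫⁻ t in E, f t * w t ∂μ := by
  rcases pieces.eq_empty_or_nonempty with rfl | hne
  · rw [sUnion_empty, subset_empty_iff] at hEpieces
    subst hEpieces
    simpa using copsonCost_le (μ := μ) (v := v) (f := (∅ : Set ℝ).indicator f) measurable_zero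
      fun x _ => by simp
  obtain ⟨P, rfl⟩ := hpieces.exists_eq_range hne
  set D : ℕ → Set ℝ := fun n => E ∩ disjointed P n
  have hDm : ∀ n, MeasurableSet (D n) := fun n =>
    hE.inter (.disjointed (fun k => hpiecesm _ (mem_range_self k)) n)
  have hDd : Pairwise (Function.onFun Disjoint D) := fun m n hmn =>
    (disjoint_disjointed P hmn).mono inter_subset_right inter_subset_right
  have hDU : ⋃ n, D n = E := by
    rw [← inter_iUnion, iUnion_disjointed, ← sUnion_range, inter_eq_left.2 hEpieces]
  calc copsonCost μ v (E.indicator f)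
      ≤ copsonCost μ v (fun t => ∑' n, (D n).indicator f t) := copsonCost_mono fun t => by
        rw [← hDU, indicator_iUnion_apply bot_eq_zero]
        exact iSup_le fun n => ENNReal.le_tsum n
    _ ≤ ∑' n, copsonCost μ v ((D n).indicator f) :=
        copsonCost_tsum_le hv fun n => hf.indicator (hDm n)
    _ ≤ ∑' n, ∫⁻ t in D n, f t * w t ∂μ := ENNReal.tsum_le_tsum fun n =>
        hpiece _ (mem_range_self n) _ (inter_subset_right.trans (disjointed_subset P n)) (hDm n)
    _ = ∫⁻ t in E, f t * w t ∂μ := by rw [← lintegral_iUnion hDm hDd, hDU]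

theorem copsonCost_indicator_le_of_le (hf : Measurable f) {w : ℝ → ℝ≥0∞} {D : Set ℝ}
    (hD : MeasurableSet D) (hvw : ∀ t ∈ D, v t ≤ w t) :
    copsonCost μ v (D.indicator f) ≤ ∫⁻ t in D, f t * w t ∂μ := by
  refine (copsonCost_le (hf.indicator hD) fun _ _ => le_rfl).trans <|
    (setLIntegral_le_lintegral _ _).trans ?_
  rw [← lintegral_indicator hD]
  refine lintegral_mono fun t => ?_
  by_cases ht : t ∈ D
  · simpa [ht] using mul_le_mul_right (hvw t ht) (f t)
  · simp [ht]

theorem copsonCost_indicator_le_of_transport {B S : Set ℝ} {q : ℝ} {β : ℝ≥0∞}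
    (hB : MeasurableSet B) (hBq : B ⊆ Iio q) (hS : MeasurableSet S) (hSq : S ⊆ Ici q)
    (hS0 : μ S ≠ 0) (hS_top : μ S ≠ ∞) (hvS : ∀ t ∈ S, v t ≤ β) :
    copsonCost μ v (B.indicator f) ≤ β * ∫⁻ t in B, f t ∂μ := by
  set c := (∫⁻ t in B, f t ∂μ) / μ S
  have hcS : c * μ S = ∫⁻ t in B, f t ∂μ := ENNReal.div_mul_cancel hS0 hS_top
  refine (copsonCost_le (g := S.indicator fun _ => c) (measurable_const.indicator hS)
    fun x _ => ?_).trans ?_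
  · rw [setLIntegral_indicator hB, setLIntegral_indicator hS, setLIntegral_const]
    rcases le_or_gt x q with hxq | hqx
    · rw [inter_eq_left.2 (hSq.trans (Ici_subset_Ici.2 hxq)), hcS]
      exact lintegral_mono_set inter_subset_left
    · rw [eq_empty_of_forall_notMem (s := B ∩ Ici x) fun t ht =>
          ((hBq ht.1).trans hqx).not_ge ht.2, Measure.restrict_empty, lintegral_zero_measure]
      exact zero_le
  · calc ∫⁻ t in Ioi 0, S.indicator (fun _ => c) t * v t ∂μ
        ≤ ∫⁻ t, S.indicator (fun _ => c * β) t ∂μ := by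
          refine (setLIntegral_le_lintegral _ _).trans (lintegral_mono fun t => ?_)
          by_cases ht : t ∈ S
          · simpa [ht] using mul_le_mul_right (hvS t ht) c
          · simp [ht]
      _ = β * ∫⁻ t in B, f t ∂μ := by
          rw [lintegral_indicator_const hS, ← hcS]
          ring

end CopsonCost

section UpperBound

variable {μ : Measure ℝ} [SigmaFinite μ] {v f : ℝ → ℝ≥0∞}

theorem copsonCost_indicator_le_of_increasingMinorant_lt (hv : Measurable v) (hf : Measurable f)
    {E : Set ℝ} (hE : MeasurableSet E) {β : ℝ≥0∞}
    (hβ : ∀ t ∈ E, increasingMinorant μ v t < β) :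
    copsonCost μ v (E.indicator f) ≤ β * ∫⁻ t in E, f t ∂μ := by
  set F := {s | v s < β}
  have hF : MeasurableSet F := hv measurableSet_Iio
  set Q := {q : ℚ | μ (F ∩ Ici (q : ℝ)) ≠ 0}
  have hcover : E ⊆ ⋃₀ insert F ((fun q : ℚ => Iio (q : ℝ)) '' Q) := by
    intro t ht
    by_cases htF : t ∈ F
    · exact ⟨F, mem_insert _ _, htF⟩
    have hIci : F ∩ Ici t = F ∩ Ioi t := by
      rw [← Ioi_insert, inter_insert_of_notMem htF]
    obtain ⟨q, htq, hq⟩ := exists_rat_gt_measure_inter_Ici_ne_zero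
      (hIci ▸ fun h0 => (hβ t ht).not_ge (measure_setOf_lt_inter_Ici_eq_zero_iff.1 h0))
    exact ⟨Iio q, mem_insert_of_mem _ ⟨q, hq, rfl⟩, htq⟩
  rw [mul_comm, ← lintegral_mul_const _ hf]
  refine copsonCost_indicator_le_of_subset_sUnion hv hf (((to_countable Q).image _).insert F)
    ?_ hE hcover ?_
  · rintro P (rfl | ⟨q, -, rfl⟩)
    exacts [hF, measurableSet_Iio]
  · rintro P (rfl | ⟨q, hq, rfl⟩) D hDP hD
    · exact copsonCost_indicator_le_of_le hf hD fun t ht => (hDP ht).le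
    obtain ⟨S, hS, hSF, hS0, hS_top⟩ :=
      Measure.exists_subset_measure_lt_top (hF.inter measurableSet_Ici) (pos_iff_ne_zero.2 hq)
    rw [lintegral_mul_const _ hf, mul_comm]
    exact copsonCost_indicator_le_of_transport hD hDP hS (fun s hs => (hSF hs).2) hS0.ne'
      hS_top.ne fun s hs => (hSF hs).1.le

theorem copsonCost_indicator_top_eq_zero (hv : Measurable v) {D : Set ℝ} (hD : MeasurableSet D)
    (hD_top : μ D ≠ ∞) (hW : ∀ t ∈ D, increasingMinorant μ v t = 0) :
    copsonCost μ v (D.indicator fun _ => ∞) = 0 := by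
  have hone : copsonCost μ v (D.indicator 1) = 0 := by
    refine nonpos_iff_eq_zero.1 ?_
    simpa using ENNReal.le_mul_of_forall_gt_le_mul (y := μ D) zero_ne_top (.inl hD_top)
      fun β hβ _ => by
        simpa using copsonCost_indicator_le_of_increasingMinorant_lt hv measurable_one hD
          (β := β) fun t ht => (hW t ht).trans_lt hβ
  have htsum : D.indicator (fun _ => ∞) = fun t => ∑' _ : ℕ, D.indicator 1 t := by
    funext t
    by_cases ht : t ∈ D <;> simp [ht]
  rw [htsum]
  refine nonpos_iff_eq_zero.1 <|
    (copsonCost_tsum_le hv fun _ => measurable_one.indicator hD).trans ?_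
  simp [hone]

theorem copsonCost_le_mul_lintegral_mul_increasingMinorant (hv : Measurable v) (hf : Measurable f)
    {a : ℝ≥0∞} (ha : 1 < a) (ha_top : a ≠ ∞) :
    copsonCost μ v f ≤ a * ∫⁻ t in Ioi 0, f t * increasingMinorant μ v t ∂μ := by
  set W := increasingMinorant μ v
  have hW : Measurable W := measurable_increasingMinorant μ v
  have ha0 : a ≠ 0 := (zero_lt_one.trans ha).ne'
  set C : ℤ → Set ℝ := fun k => W ⁻¹' Ico (a ^ k) (a ^ (k + 1))
  set Z : ℕ → Set ℝ := fun n => W ⁻¹' {0} ∩ spanningSets μ n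
  have hcover : Ioi 0 ⊆ ⋃₀ insert (W ⁻¹' {∞}) (range C ∪ range Z) := by
    intro t _
    by_cases ht_top : W t = ∞
    · exact ⟨_, mem_insert _ _, ht_top⟩
    by_cases ht0 : W t = 0
    · exact ⟨_, mem_insert_of_mem _ (.inr ⟨spanningSetsIndex μ t, rfl⟩),
        ht0, mem_spanningSetsIndex μ t⟩
    obtain ⟨k, hk⟩ := ENNReal.exists_mem_Ico_zpow ht0 ht_top ha ha_top
    exact ⟨_, mem_insert_of_mem _ (.inl ⟨k, rfl⟩), hk⟩
  rw [← copsonCost_indicator_Ioi, ← lintegral_const_mul' _ _ ha_top]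
  simp_rw [mul_left_comm a]
  refine copsonCost_indicator_le_of_subset_sUnion hv hf
    (((countable_range C).union (countable_range Z)).insert _) ?_ measurableSet_Ioi hcover ?_
  · rintro P (rfl | ⟨k, rfl⟩ | ⟨n, rfl⟩)
    exacts [hW (measurableSet_singleton _), hW measurableSet_Ico,
      (hW (measurableSet_singleton _)).inter (measurableSet_spanningSets μ n)]
  · rintro P (rfl | ⟨k, rfl⟩ | ⟨n, rfl⟩) D hDP hD
    · refine copsonCost_indicator_le_of_le hf hD fun t ht => ?_
      rw [show W t = ∞ from hDP ht, ENNReal.mul_top ha0]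
      exact le_top
    · refine (copsonCost_indicator_le_of_increasingMinorant_lt hv hf hD
        fun t ht => (hDP ht).2).trans ?_
      rw [← lintegral_const_mul _ hf]
      refine setLIntegral_mono' hD fun t ht => ?_
      rw [ENNReal.zpow_add ha0 ha_top, zpow_one, mul_comm (f t), mul_comm (a ^ k) a]
      exact mul_le_mul_left (mul_le_mul_right (hDP ht).1 a) _
    · refine (copsonCost_mono (f' := D.indicator fun _ => ∞) fun _ =>
        indicator_le_indicator le_top).trans ?_
      rw [copsonCost_indicator_top_eq_zero hv hD
        (ne_top_of_le_ne_top (measure_spanningSets_lt_top μ n).ne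
          (measure_mono (hDP.trans inter_subset_right)))
        fun t ht => (hDP ht).1]
      exact zero_le

theorem copsonCost_le_lintegral_mul_increasingMinorant (hv : Measurable v) (hf : Measurable f) :
    copsonCost μ v f ≤ ∫⁻ t in Ioi 0, f t * increasingMinorant μ v t ∂μ := by
  simpa using ENNReal.le_mul_of_forall_gt_le_mul one_ne_top (.inr one_ne_zero) fun a ha ha_top =>
    copsonCost_le_mul_lintegral_mul_increasingMinorant hv hf ha ha_top

end UpperBound

/-- Sinnamon's identity for the Copson operator:
the infimum of `∫ g v dμ` over all nonnegative measurable `g` with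
`H*g ≥ H*f` equals `∫ f v↑ dμ`, where `v↑(x) = ess inf_{x≤t<∞} v(t)`. -/
theorem inf_over_Copson_majorants_eq_lintegral_increasing_minorant
    (μ : Measure ℝ) [SigmaFinite μ] (v f : ℝ → ℝ≥0∞)
    (hv : Measurable v) (hf : Measurable f) :
    (⨅ (g : ℝ → ℝ≥0∞) (_ : Measurable g)
        (_ : ∀ x > (0 : ℝ), (∫⁻ t in Set.Ici x, f t ∂μ) ≤ ∫⁻ t in Set.Ici x, g t ∂μ),
        ∫⁻ t in Set.Ioi (0 : ℝ), g t * v t ∂μ)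
      = ∫⁻ t in Set.Ioi (0 : ℝ), f t * essInf v (μ.restrict (Set.Ici t)) ∂μ :=
  le_antisymm (copsonCost_le_lintegral_mul_increasingMinorant hv hf)
    (lintegral_mul_increasingMinorant_le_copsonCost hv hf)
end

section
/- Let q ∈ (0,∞], N ≤ M in ℤ ∪ {±∞}, and {τ_k}_{k=N}^M a geometrically increasing sequence (there exists α > 1 with τ_k ≥ α τ_{k-1} for all k). Then for all nonnegative sequences {a_k}, the ℓ^q norm of {τ_k ∑_{m=k}^M a_m} is equivalent (with constants depending only on α and q) to the ℓ^q norm of {τ_k a_k}. -/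
/-!
Geometric growth gives `τ k ≤ α⁻¹ ^ j * τ (k + j)`, so `τ k * ∑_{m ≥ k} a m` is dominated by the
one-sided convolution `∑_j α⁻¹ ^ j * (τ a) (k + j)` of `τ a` with a summable geometric kernel.
Such a convolution is bounded on `ℓ^q`: for `q ≥ 1` by Hölder's inequality with weights `α⁻¹ ^ j`,
for `q ≤ 1` by subadditivity of `x ↦ x ^ q`, and for `q = ∞` directly. The reverse inequality is
trivial, as the tail sum starting at `k` contains `a k`.
-/

open ENNReal Set

/-- The discrete `ℓ^q` quasi-norm over an index set `Z ⊆ ℤ`, with `q ∈ (0,∞]`. -/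
noncomputable def lqNorm (q : ℝ≥0∞) (Z : Set ℤ) (b : ℤ → ℝ≥0∞) : ℝ≥0∞ :=
  if q = ∞ then ⨆ k ∈ Z, b k else (∑' k : Z, b (k : ℤ) ^ q.toReal) ^ (1 / q.toReal)

namespace ENNReal

variable {ι : Type*}

theorem rpow_sum_le_sum_rpow (s : Finset ι) (f : ι → ℝ≥0∞) {p : ℝ} (hp₀ : 0 < p) (hp₁ : p ≤ 1) :
    (∑ i ∈ s, f i) ^ p ≤ ∑ i ∈ s, f i ^ p := by
  classical
  induction s using Finset.induction with
  | empty => simp [hp₀]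
  | insert i s hi ih =>
    rw [Finset.sum_insert hi, Finset.sum_insert hi]
    exact (rpow_add_le_add_rpow _ _ hp₀.le hp₁).trans (add_le_add_right ih _)

theorem rpow_tsum_le_tsum_rpow (f : ι → ℝ≥0∞) {p : ℝ} (hp₀ : 0 < p) (hp₁ : p ≤ 1) :
    (∑' i, f i) ^ p ≤ ∑' i, f i ^ p := by
  rw [← le_rpow_inv_iff hp₀, ENNReal.tsum_eq_iSup_sum]
  exact iSup_le fun s => (le_rpow_inv_iff hp₀).2 <|
    (rpow_sum_le_sum_rpow s f hp₀ hp₁).trans (ENNReal.sum_le_tsum s)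

theorem inner_le_weight_mul_Lp_tsum {p : ℝ} (hp : 1 ≤ p) (w f : ι → ℝ≥0∞) :
    ∑' i, w i * f i ≤ (∑' i, w i) ^ (1 - p⁻¹) * (∑' i, w i * f i ^ p) ^ p⁻¹ := by
  have hp₀ : 0 ≤ p⁻¹ := inv_nonneg.2 (zero_le_one.trans hp)
  have hp₁ : 0 ≤ 1 - p⁻¹ := sub_nonneg.2 (inv_le_one_of_one_le₀ hp)
  rw [ENNReal.tsum_eq_iSup_sum]
  refine iSup_le fun s => (inner_le_weight_mul_Lp_of_nonneg s hp w f).trans ?_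
  gcongr <;> exact ENNReal.sum_le_tsum s

end ENNReal

theorem exists_rpow_tsum_geometric_mul_le {r : ℝ≥0∞} (hr : r < 1) {p : ℝ} (hp : 0 < p) :
    ∃ w : ℕ → ℝ≥0∞, ∑' j, w j ≠ ∞ ∧
      ∀ y : ℕ → ℝ≥0∞, (∑' j, r ^ j * y j) ^ p ≤ ∑' j, w j * y j ^ p := by
  rcases le_total p 1 with hp₁ | hp₁
  · refine ⟨fun j => (r ^ p) ^ j, ?_, fun y => ?_⟩
    · rw [ENNReal.tsum_geometric]
      exact inv_ne_top.2 (tsub_pos_of_lt (rpow_lt_one hr hp)).ne'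
    · refine (rpow_tsum_le_tsum_rpow _ hp hp₁).trans_eq (tsum_congr fun j => ?_)
      dsimp only
      rw [mul_rpow_of_nonneg _ _ hp.le, ← rpow_natCast, ← rpow_natCast, ← rpow_mul, ← rpow_mul,
        mul_comm p]
  · have hA : ∑' j : ℕ, r ^ j ≠ ∞ := by
      rw [ENNReal.tsum_geometric]
      exact inv_ne_top.2 (tsub_pos_of_lt hr).ne'
    set A := ∑' j : ℕ, r ^ j
    refine ⟨fun j => A ^ (p - 1) * r ^ j, ?_, fun y => ?_⟩
    · rw [ENNReal.tsum_mul_left]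
      exact mul_ne_top (rpow_ne_top_of_nonneg (by linarith) hA) hA
    · calc (∑' j, r ^ j * y j) ^ p
          ≤ (A ^ (1 - p⁻¹) * (∑' j, r ^ j * y j ^ p) ^ p⁻¹) ^ p := by
            gcongr
            exact inner_le_weight_mul_Lp_tsum hp₁ _ _
        _ = A ^ (p - 1) * ∑' j, r ^ j * y j ^ p := by
            rw [mul_rpow_of_nonneg _ _ (by linarith), ← rpow_mul, ← rpow_mul,
              inv_mul_cancel₀ (by linarith), rpow_one, sub_mul, one_mul,
              inv_mul_cancel₀ (by linarith)]
        _ = ∑' j, A ^ (p - 1) * r ^ j * y j ^ p := by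
            simp only [mul_assoc, ENNReal.tsum_mul_left]

theorem tsum_rpow_tsum_geometric_shift_le {r : ℝ≥0∞} {p : ℝ} {w : ℕ → ℝ≥0∞}
    (H : ∀ y : ℕ → ℝ≥0∞, (∑' j, r ^ j * y j) ^ p ≤ ∑' j, w j * y j ^ p) (b : ℤ → ℝ≥0∞) :
    ∑' k : ℤ, (∑' j : ℕ, r ^ j * b (k + j)) ^ p ≤ (∑' j, w j) * ∑' m : ℤ, b m ^ p := by
  calc ∑' k : ℤ, (∑' j : ℕ, r ^ j * b (k + j)) ^ p
      ≤ ∑' k : ℤ, ∑' j : ℕ, w j * b (k + j) ^ p := ENNReal.tsum_le_tsum fun k => H _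
    _ = ∑' j : ℕ, w j * ∑' k : ℤ, b (k + j) ^ p := by
        rw [ENNReal.tsum_comm]
        simp only [ENNReal.tsum_mul_left]
    _ = (∑' j, w j) * ∑' m : ℤ, b m ^ p := by
        have hshift (j : ℕ) : ∑' k : ℤ, b (k + j) ^ p = ∑' m : ℤ, b m ^ p :=
          (Equiv.addRight (j : ℤ)).tsum_eq (fun m => b m ^ p)
        simp only [hshift, ENNReal.tsum_mul_right]

theorem lqNorm_mono (q : ℝ≥0∞) (Z : Set ℤ) {f g : ℤ → ℝ≥0∞} (h : ∀ k ∈ Z, f k ≤ g k) :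
    lqNorm q Z f ≤ lqNorm q Z g := by
  unfold lqNorm
  split_ifs
  · exact iSup₂_mono h
  · gcongr with k
    exact h k k.2

theorem lqNorm_top_geometric_shift_le (r : ℝ≥0∞) (Z : Set ℤ) (f : ℤ → ℝ≥0∞) :
    lqNorm ∞ Z (fun k => ∑' j : ℕ, r ^ j * Z.indicator f (k + j)) ≤ (1 - r)⁻¹ * lqNorm ∞ Z f := by
  simp only [lqNorm, if_pos]
  refine iSup₂_le fun k _ => ?_
  calc ∑' j : ℕ, r ^ j * Z.indicator f (k + j)
      ≤ ∑' j : ℕ, r ^ j * ⨆ m ∈ Z, f m := by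
        gcongr with j
        exact Set.indicator_le (fun m hm => le_iSup₂ (f := fun m _ => f m) m hm) _
    _ = (1 - r)⁻¹ * ⨆ m ∈ Z, f m := by rw [ENNReal.tsum_mul_right, ENNReal.tsum_geometric]

theorem lqNorm_geometric_shift_le {r : ℝ≥0∞} {q : ℝ≥0∞} (hq : q ≠ ∞) (hp : 0 < q.toReal)
    {w : ℕ → ℝ≥0∞}
    (H : ∀ y : ℕ → ℝ≥0∞, (∑' j, r ^ j * y j) ^ q.toReal ≤ ∑' j, w j * y j ^ q.toReal)
    (Z : Set ℤ) (f : ℤ → ℝ≥0∞) :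
    lqNorm q Z (fun k => ∑' j : ℕ, r ^ j * Z.indicator f (k + j))
      ≤ (∑' j, w j) ^ (1 / q.toReal) * lqNorm q Z f := by
  simp only [lqNorm, if_neg hq]
  set p := q.toReal
  have hindicator : ∑' m : ℤ, Z.indicator f m ^ p = ∑' m : Z, f m ^ p := by
    rw [tsum_subtype Z (fun m => f m ^ p)]
    congr 1 with m
    by_cases hm : m ∈ Z <;> simp [hm, hp]
  rw [← ENNReal.mul_rpow_of_nonneg _ _ (by positivity), ← hindicator]
  gcongr
  calc ∑' k : Z, (∑' j : ℕ, r ^ j * Z.indicator f (k + j)) ^ p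
      ≤ ∑' k : ℤ, (∑' j : ℕ, r ^ j * Z.indicator f (k + j)) ^ p :=
        ENNReal.tsum_comp_le_tsum_of_injective Subtype.val_injective
          (fun k => (∑' j : ℕ, r ^ j * Z.indicator f (k + j)) ^ p)
    _ ≤ _ := tsum_rpow_tsum_geometric_shift_le H _

theorem exists_lqNorm_geometric_shift_le {r : ℝ≥0∞} (hr : r < 1) {q : ℝ≥0∞} (hq : 0 < q) :
    ∃ C < ∞, ∀ (Z : Set ℤ) (f : ℤ → ℝ≥0∞),
      lqNorm q Z (fun k => ∑' j : ℕ, r ^ j * Z.indicator f (k + j)) ≤ C * lqNorm q Z f := by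
  by_cases hq_top : q = ∞
  · subst hq_top
    exact ⟨(1 - r)⁻¹, inv_lt_top.2 (tsub_pos_of_lt hr), lqNorm_top_geometric_shift_le r⟩
  · have hp : 0 < q.toReal := toReal_pos hq.ne' hq_top
    obtain ⟨w, hw, H⟩ := exists_rpow_tsum_geometric_mul_le hr hp
    exact ⟨(∑' j, w j) ^ (1 / q.toReal), rpow_lt_top_of_nonneg (by positivity) hw,
      lqNorm_geometric_shift_le hq_top hp H⟩

theorem tsum_inter_Ici_eq_tsum_nat (Z : Set ℤ) (f : ℤ → ℝ≥0∞) (k : ℤ) :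
    ∑' m : ↥(Z ∩ Ici k), f m = ∑' j : ℕ, Z.indicator f (k + j) := by
  rw [tsum_subtype, ← (add_right_injective k).comp Nat.cast_injective |>.tsum_eq]
  · congr 1 with j
    have hj : k + (j : ℤ) ∈ Ici k := by simp
    rw [Function.comp_apply, Set.inter_comm, ← Set.indicator_indicator, Set.indicator_of_mem hj]
  · intro m hm
    have hkm : k ≤ m := (Set.support_indicator_subset hm).2
    exact ⟨(m - k).toNat, by simp; omega⟩

theorem pow_mul_le_of_geometric {α : ℝ≥0∞} {Z : Set ℤ} (hZ : Z.OrdConnected) {τ : ℤ → ℝ≥0∞}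
    (hgeo : ∀ k, k ∈ Z → k - 1 ∈ Z → α * τ (k - 1) ≤ τ k) {k : ℤ} (hk : k ∈ Z) :
    ∀ n : ℕ, k + n ∈ Z → α ^ n * τ k ≤ τ (k + n) := by
  intro n
  induction n with
  | zero => simp
  | succ n ih =>
    intro hn
    push_cast at hn ⊢
    rw [← add_assoc] at hn ⊢
    have hmem : k + n ∈ Z := hZ.out hk hn ⟨by omega, by omega⟩
    calc α ^ (n + 1) * τ k = α * (α ^ n * τ k) := by rw [pow_succ']; ring
      _ ≤ α * τ (k + n) := by gcongr; exact ih hmem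
      _ ≤ τ (k + n + 1) := by
          simpa using hgeo (k + n + 1) hn (by simpa using hmem)

theorem mul_tsum_inter_Ici_le_of_geometric {α : ℝ≥0∞} (hα₀ : α ≠ 0) (hα : α ≠ ∞) {Z : Set ℤ}
    (hZ : Z.OrdConnected) {τ : ℤ → ℝ≥0∞}
    (hgeo : ∀ k, k ∈ Z → k - 1 ∈ Z → α * τ (k - 1) ≤ τ k) (a : ℤ → ℝ≥0∞) {k : ℤ} (hk : k ∈ Z) :
    τ k * ∑' m : ↥(Z ∩ Ici k), a m
      ≤ ∑' j : ℕ, α⁻¹ ^ j * Z.indicator (fun m => τ m * a m) (k + j) := by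
  rw [tsum_inter_Ici_eq_tsum_nat, ← ENNReal.tsum_mul_left]
  refine ENNReal.tsum_le_tsum fun j => ?_
  by_cases hj : k + j ∈ Z
  · have hτ := (mul_le_iff_le_inv (pow_ne_zero j hα₀) (pow_ne_top hα)).1
      (pow_mul_le_of_geometric hZ hgeo hk j hj)
    rw [Set.indicator_of_mem hj, Set.indicator_of_mem hj, ← mul_assoc, ← ENNReal.inv_pow]
    exact mul_le_mul_left hτ _
  · simp [hj]

/-- Leindler: for a geometrically increasing sequence `{τ_k}` on an
integer interval `Z` (with right endpoint `M`), the `ℓ^q` norm of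
`{τ_k ∑_{m=k}^{M} a_m}` is equivalent to that of `{τ_k a_k}`, with constants
depending only on `α` and `q`. -/
theorem lq_norm_tail_sums_equiv_geometric
    (q : ℝ≥0∞) (hq : 0 < q) (α : ℝ≥0∞) (hα : 1 < α) (hα' : α < ∞) :
    ∃ c₁ c₂ : ℝ≥0∞, 0 < c₁ ∧ c₂ < ∞ ∧
      ∀ (Z : Set ℤ), Z.OrdConnected → Z.Nonempty →
      ∀ (τ : ℤ → ℝ≥0∞), (∀ k ∈ Z, 0 < τ k ∧ τ k < ∞) →
        (∀ k, k ∈ Z → (k - 1) ∈ Z → α * τ (k - 1) ≤ τ k) →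
      ∀ a : ℤ → ℝ≥0∞,
        c₁ * lqNorm q Z (fun k => τ k * a k)
          ≤ lqNorm q Z (fun k => τ k * ∑' m : ↥(Z ∩ Set.Ici k), a (m : ℤ)) ∧
        lqNorm q Z (fun k => τ k * ∑' m : ↥(Z ∩ Set.Ici k), a (m : ℤ))
          ≤ c₂ * lqNorm q Z (fun k => τ k * a k) := by
  obtain ⟨C, hC, hshift⟩ := exists_lqNorm_geometric_shift_le (ENNReal.inv_lt_one.2 hα) hq
  refine ⟨1, C, one_pos, hC, fun Z hZ _ τ _ hgeo a => ⟨?_, ?_⟩⟩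
  · rw [one_mul]
    refine lqNorm_mono q Z fun k hk => mul_le_mul_right ?_ _
    exact ENNReal.le_tsum (⟨k, hk, self_mem_Ici⟩ : ↥(Z ∩ Ici k))
  · calc lqNorm q Z (fun k => τ k * ∑' m : ↥(Z ∩ Set.Ici k), a (m : ℤ))
        ≤ lqNorm q Z (fun k => ∑' j : ℕ, α⁻¹ ^ j * Z.indicator (fun m => τ m * a m) (k + j)) :=
          lqNorm_mono q Z fun k hk =>
            mul_tsum_inter_Ici_le_of_geometric (zero_lt_one.trans hα).ne' hα'.ne hZ hgeo a hk
      _ ≤ C * lqNorm q Z (fun k => τ k * a k) := hshift Z _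
end

section
/- Let 0 < r < ∞, Z ⊆ ℤ nonempty, and {v_k}, {w_k} positive sequences indexed by Z. If the embedding ℓ¹({v_k}, Z) ↪ ℓ^r({w_k}, Z) holds with norm C (i.e., (∑_k |a_k w_k|^r)^{1/r} ≤ C ∑_k |a_k| v_k for all sequences {a_k}), then ‖{w_k / v_k}‖_{ℓ^ρ(Z)} ≤ C, where 1/ρ = (1/r − 1)₊ (so ρ = r/(1−r) if r < 1 and ρ = ∞ if r ≥ 1). -/
open ENNReal Set

/-!
Test the embedding on finitely supported sequences. A single atom `a = v_k⁻¹ δ_k` gives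
`w_k / v_k ≤ C`, which is the case `ρ = ∞`. For `r < 1` put `b = w / v`, `q = r / (1 - r)` and
`a_k = b_k ^ q / v_k` on a finite set `F`: since `(q + 1) r = q`, both sides of the embedding
inequality involve the same sum `S = ∑_{k ∈ F} b_k ^ q`, and `S ^ (1/r) ≤ C S` means
`S ^ (1/q) ≤ C`. Letting `F` exhaust `Z` gives `‖b‖_{ℓ^q} ≤ C`.
-/

/-- The discrete `ℓ^ρ` quasi-norm with `1/ρ = (1/r − 1)₊`:
`ρ = r/(1−r)` if `r < 1`, and `ρ = ∞` if `r ≥ 1`. -/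
noncomputable def lrhoNorm (r : ℝ) (Z : Set ℤ) (b : ℤ → ℝ≥0∞) : ℝ≥0∞ :=
  if r < 1 then (∑' k : Z, b (k : ℤ) ^ (r / (1 - r))) ^ ((1 - r) / r)
  else ⨆ k ∈ Z, b k

theorem le_rpow_of_rpow_one_div_le_mul {r : ℝ} {x C : ℝ≥0∞} (hr0 : 0 < r) (hr1 : r < 1)
    (hx : x ≠ ∞) (h : x ^ (1 / r) ≤ C * x) : x ≤ C ^ (r / (1 - r)) := by
  rcases eq_or_ne x 0 with rfl | hx0
  · exact zero_le
  have hsplit : x ^ (1 / r) = x ^ (1 : ℝ) * x ^ ((1 - r) / r) := by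
    rw [← rpow_add 1 _ hx0 hx]
    congr 1
    field_simp
    ring
  have hxe : x ^ ((1 - r) / r) ≤ C := by
    rw [hsplit, rpow_one, mul_comm C] at h
    exact (ENNReal.mul_le_mul_iff_right hx0 hx).mp h
  calc x = (x ^ ((1 - r) / r)) ^ (r / (1 - r)) := by
        rw [← rpow_mul, div_mul_div_cancel₀ hr0.ne', div_self (sub_pos.2 hr1).ne', rpow_one]
    _ ≤ C ^ (r / (1 - r)) := rpow_le_rpow hxe (div_pos hr0 (sub_pos.2 hr1)).le

def L1LrEmbeddingBound (r : ℝ) (Z : Set ℤ) (v w : ℤ → ℝ≥0∞) (C : ℝ≥0∞) : Prop :=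
  ∀ a : ℤ → ℝ≥0∞,
    (∑' k : Z, (a (k : ℤ) * w (k : ℤ)) ^ r) ^ (1 / r) ≤ C * ∑' k : Z, a (k : ℤ) * v (k : ℤ)

namespace L1LrEmbeddingBound

variable {r : ℝ} {Z : Set ℤ} {v w : ℤ → ℝ≥0∞} {C : ℝ≥0∞}

theorem finset_sum_le (hemb : L1LrEmbeddingBound r Z v w C) (hr : 0 < r)
    (f : ℤ → ℝ≥0∞) (F : Finset Z) :
    (∑ j ∈ F, (f j * w j) ^ r) ^ (1 / r) ≤ C * ∑ j ∈ F, f j * v j := by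
  classical
  set a := (Subtype.val '' (F : Set Z)).indicator f
  have ha : ∀ j : Z, a j = if j ∈ F then f j else 0 := fun j => by
    simp only [a, indicator, Subtype.val_injective.mem_set_image, Finset.mem_coe]
  have hw_sum : ∑' j : Z, (a j * w j) ^ r = ∑ j ∈ F, (f j * w j) ^ r := by
    rw [tsum_eq_sum (s := F) fun j hj => by rw [ha, if_neg hj, zero_mul, zero_rpow_of_pos hr]]
    exact Finset.sum_congr rfl fun j hj => by rw [ha, if_pos hj]
  have hv_sum : ∑' j : Z, a j * v j = ∑ j ∈ F, f j * v j := by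
    rw [tsum_eq_sum (s := F) fun j hj => by rw [ha, if_neg hj, zero_mul]]
    exact Finset.sum_congr rfl fun j hj => by rw [ha, if_pos hj]
  simpa only [hw_sum, hv_sum] using hemb a

theorem div_le (hemb : L1LrEmbeddingBound r Z v w C) (hr : 0 < r) {k : ℤ} (hk : k ∈ Z)
    (hv0 : v k ≠ 0) (hvtop : v k ≠ ∞) : w k / v k ≤ C := by
  have key := hemb.finset_sum_le hr (fun _ => (v k)⁻¹) {⟨k, hk⟩}
  rwa [Finset.sum_singleton, Finset.sum_singleton, ← rpow_mul, mul_one_div_cancel hr.ne',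
    rpow_one, ENNReal.inv_mul_cancel hv0 hvtop, mul_one, ← ENNReal.div_eq_inv_mul] at key

theorem tsum_div_rpow_le (hemb : L1LrEmbeddingBound r Z v w C) (hr0 : 0 < r) (hr1 : r < 1)
    (hv0 : ∀ k ∈ Z, v k ≠ 0) (hvtop : ∀ k ∈ Z, v k ≠ ∞) (hwtop : ∀ k ∈ Z, w k ≠ ∞) :
    ∑' k : Z, (w k / v k) ^ (r / (1 - r)) ≤ C ^ (r / (1 - r)) := by
  set q := r / (1 - r) with hq
  set b : ℤ → ℝ≥0∞ := fun k => w k / v k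
  have hq0 : 0 ≤ q := (div_pos hr0 (sub_pos.2 hr1)).le
  have hqr : (q + 1) * r = q := by
    rw [hq]
    field_simp [(sub_pos.2 hr1).ne']
    ring
  have htest_v : ∀ j : Z, b j ^ q / v j * v j = b j ^ q := fun j =>
    ENNReal.div_mul_cancel (hv0 j j.2) (hvtop j j.2)
  have htest_w : ∀ j : Z, (b j ^ q / v j * w j) ^ r = b j ^ q := fun j => by
    rw [div_eq_mul_inv, mul_assoc, ← ENNReal.div_eq_inv_mul, ← rpow_one (w j / v j),
      ← rpow_add_of_nonneg _ _ hq0 zero_le_one, ← rpow_mul, hqr]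
  rw [ENNReal.tsum_eq_iSup_sum]
  refine iSup_le fun F => le_rpow_of_rpow_one_div_le_mul hr0 hr1 ?_ ?_
  · exact ENNReal.sum_ne_top.2 fun j _ =>
      rpow_ne_top_of_nonneg hq0 (ENNReal.div_lt_top (hwtop j j.2) (hv0 j j.2)).ne
  · simpa only [htest_v, htest_w] using hemb.finset_sum_le hr0 (fun j => b j ^ q / v j) F

end L1LrEmbeddingBound

theorem embedding_l1_lr_implies_lrho_bound_general
    (r : ℝ) (hr : 0 < r) (Z : Set ℤ)
    (v w : ℤ → ℝ≥0∞) (hv : ∀ k ∈ Z, 0 < v k ∧ v k < ∞) (hw : ∀ k ∈ Z, 0 < w k ∧ w k < ∞)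
    (C : ℝ≥0∞)
    (hemb : ∀ a : ℤ → ℝ≥0∞,
      (∑' k : Z, (a (k : ℤ) * w (k : ℤ)) ^ r) ^ (1 / r) ≤ C * ∑' k : Z, a (k : ℤ) * v (k : ℤ)) :
    lrhoNorm r Z (fun k => w k / v k) ≤ C := by
  have hemb : L1LrEmbeddingBound r Z v w C := hemb
  have hv0 : ∀ k ∈ Z, v k ≠ 0 := fun k hk => (hv k hk).1.ne'
  have hvtop : ∀ k ∈ Z, v k ≠ ∞ := fun k hk => (hv k hk).2.ne
  rw [lrhoNorm]
  split_ifs with hr1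
  · calc (∑' k : Z, (w k / v k) ^ (r / (1 - r))) ^ ((1 - r) / r)
        ≤ (C ^ (r / (1 - r))) ^ ((1 - r) / r) :=
          rpow_le_rpow (hemb.tsum_div_rpow_le hr hr1 hv0 hvtop fun k hk => (hw k hk).2.ne)
            (div_pos (sub_pos.2 hr1) hr).le
      _ = C := by
          rw [← rpow_mul, div_mul_div_cancel₀ (sub_pos.2 hr1).ne', div_self hr.ne', rpow_one]
  · exact iSup₂_le fun k hk => hemb.div_le hr hk (hv0 k hk) (hvtop k hk)

/-- discrete Landau resonance: if `ℓ¹({v_k},Z) ↪ ℓ^r({w_k},Z)`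
with embedding constant `C`, then `‖{w_k/v_k}‖_{ℓ^ρ(Z)} ≤ C`, where
`1/ρ = (1/r − 1)₊`. -/
theorem embedding_l1_lr_implies_lrho_bound
    (r : ℝ) (hr : 0 < r) (Z : Set ℤ) (hZ : Z.Nonempty)
    (v w : ℤ → ℝ≥0∞) (hv : ∀ k ∈ Z, 0 < v k ∧ v k < ∞) (hw : ∀ k ∈ Z, 0 < w k ∧ w k < ∞)
    (C : ℝ≥0∞)
    (hemb : ∀ a : ℤ → ℝ≥0∞,
      (∑' k : Z, (a (k : ℤ) * w (k : ℤ)) ^ r) ^ (1 / r) ≤ C * ∑' k : Z, a (k : ℤ) * v (k : ℤ)) :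
    lrhoNorm r Z (fun k => w k / v k) ≤ C :=
  embedding_l1_lr_implies_lrho_bound_general r hr Z v w hv hw C hemb
end

section
/- Let 0 < q, r < ∞ with r ≥ 1, v non-decreasing weight, {x_k} a covering sequence with ∫_0^{x_k} u = 2^k. Then sup_{-∞<k≤M} 2^{k/r} (∫_{x_k}^{x_{k+1}} v(s)^{−q} w(s) ds)^{1/q} is equivalent (up to constants independent of the data) to sup_{t>0} (∫_0^t u)^{1/r} (∫_t^∞ v(s)^{−q} w(s) ds)^{1/q}. -/
/-!
On a block `x k < t ≤ x (k + 1)` the mass `∫₀ᵗ u` lies between `2 ^ k` and `2 ^ (k + 1)`, so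
evaluating the continuous supremum at `t = x k` dominates the `k`-th dyadic term. Conversely, the
tail `∫ₜ^∞ v^(-q) w` is at most the sum of the blocks `j ≥ k`, and the `j`-th block is at most
`2 ^ (-j q / r)` times the `q`-th power of the dyadic supremum. The geometric series sums to
`2 ^ (-k q / r) / (1 - 2 ^ (-q / r))`, and the factors `2 ^ (± k / r)` cancel.
-/

open MeasureTheory ENNReal Set

/-- A weight on `(0,∞)`: measurable, with positive finite integral over each `(0,x]`. -/
def IsWeight (v : ℝ → ℝ≥0∞) : Prop :=
  Measurable v ∧ ∀ x > (0 : ℝ),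
    (0 < ∫⁻ t in Set.Ioc 0 x, v t) ∧ (∫⁻ t in Set.Ioc 0 x, v t) < ∞

open Filter

theorem lintegral_Ioi_eq_tsum_lintegral_Ioc {μ : Measure ℝ} {g : ℕ → ℝ} (hg : Monotone g)
    (hg_top : Tendsto g atTop atTop) (f : ℝ → ℝ≥0∞) :
    ∫⁻ s in Ioi (g 0), f s ∂μ = ∑' n, ∫⁻ s in Ioc (g n) (g (n + 1)), f s ∂μ := by
  have hU : ⋃ n, Ioc (g n) (g (n + 1)) = Ioi (g 0) := by
    simpa using iUnion_Ioc_map_succ_eq_Ioi (fun n => hg n.zero_le)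
      (not_bddAbove_of_tendsto_atTop hg_top)
  rw [← hU, lintegral_iUnion (fun _ => measurableSet_Ioc)]
  simpa using hg.pairwise_disjoint_on_Ioc_succ

theorem tsum_nat_add_le_of_two_rpow_mul_le {a : ℤ → ℝ≥0∞} {s : ℝ} {E : ℝ≥0∞}
    (h : ∀ j : ℤ, 2 ^ ((j : ℝ) * s) * a j ≤ E) (k : ℤ) :
    ∑' n : ℕ, a (k + n) ≤ 2 ^ (-((k : ℝ) * s)) * E * (1 - 2 ^ (-s))⁻¹ := by
  have hterm (n : ℕ) : a (k + n) ≤ 2 ^ (-((k : ℝ) * s)) * E * (2 ^ (-s)) ^ n := by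
    have h2 (y : ℝ) : (2 : ℝ≥0∞) ^ (-y) * 2 ^ y = 1 := by
      rw [← ENNReal.rpow_add _ _ two_ne_zero ofNat_ne_top, neg_add_cancel, ENNReal.rpow_zero]
    calc a (k + n)
        = 2 ^ (-(((k + n : ℤ) : ℝ) * s)) * (2 ^ (((k + n : ℤ) : ℝ) * s) * a (k + n)) := by
          rw [← mul_assoc, h2, one_mul]
      _ ≤ 2 ^ (-(((k + n : ℤ) : ℝ) * s)) * E := by gcongr; exact h _
      _ = 2 ^ (-((k : ℝ) * s)) * E * (2 ^ (-s)) ^ n := by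
          rw [← ENNReal.rpow_natCast, ← ENNReal.rpow_mul, mul_right_comm,
            ← ENNReal.rpow_add _ _ two_ne_zero ofNat_ne_top]
          push_cast
          ring_nf
  calc ∑' n : ℕ, a (k + n) ≤ ∑' n : ℕ, 2 ^ (-((k : ℝ) * s)) * E * (2 ^ (-s)) ^ n :=
        ENNReal.tsum_le_tsum hterm
    _ = 2 ^ (-((k : ℝ) * s)) * E * (1 - 2 ^ (-s))⁻¹ := by
        rw [ENNReal.tsum_mul_left, ENNReal.tsum_geometric]

theorem rpow_mul_le_rpow_of_mul_rpow_one_div_le {q : ℝ} {c y D : ℝ≥0∞} (hq : 0 < q)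
    (h : c * y ^ (1 / q) ≤ D) : c ^ q * y ≤ D ^ q := by
  have := ENNReal.rpow_le_rpow h hq.le
  rwa [ENNReal.mul_rpow_of_nonneg _ _ hq.le, ← ENNReal.rpow_mul, one_div_mul_cancel hq.ne',
    ENNReal.rpow_one] at this

theorem tendsto_atTop_of_iUnion_Ioc_eq_Ioi {x : ℤ → ℝ} (hx : Monotone x)
    (hcov : ⋃ k, Ioc (x k) (x (k + 1)) = Ioi 0) : Tendsto x atTop atTop := by
  refine hx.tendsto_atTop_atTop fun b => ?_
  have hb : max b 1 ∈ ⋃ k, Ioc (x k) (x (k + 1)) := by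
    rw [hcov]; exact lt_max_of_lt_right (zero_lt_one (α := ℝ))
  obtain ⟨k, -, hk⟩ := mem_iUnion.mp hb
  exact ⟨k + 1, (le_max_left b 1).trans hk⟩

noncomputable def discreteSup (q r : ℝ) (x : ℤ → ℝ) (f : ℝ → ℝ≥0∞) : ℝ≥0∞ :=
  ⨆ k : ℤ, (2 : ℝ≥0∞) ^ ((k : ℝ) / r) * (∫⁻ s in Ioc (x k) (x (k + 1)), f s) ^ (1 / q)

noncomputable def continuousSup (q r : ℝ) (u f : ℝ → ℝ≥0∞) : ℝ≥0∞ :=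
  ⨆ t ∈ Ioi (0 : ℝ), (∫⁻ s in Ioc 0 t, u s) ^ (1 / r) * (∫⁻ s in Ioi t, f s) ^ (1 / q)

noncomputable def supEquivConst (q r : ℝ) : ℝ≥0∞ :=
  2 ^ (1 / r) * ((1 - 2 ^ (-(q / r)))⁻¹) ^ (1 / q)

section

variable {q r : ℝ}

theorem supEquivConst_ne_zero (hq : 0 < q) : supEquivConst q r ≠ 0 := by
  have h : (1 - 2 ^ (-(q / r)) : ℝ≥0∞)⁻¹ ≠ 0 :=
    ENNReal.inv_ne_zero.mpr (ne_top_of_le_ne_top one_ne_top tsub_le_self)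
  exact mul_ne_zero (ENNReal.rpow_pos two_pos ofNat_ne_top).ne'
    (by simp [ENNReal.rpow_eq_zero_iff, h, hq.le])

theorem supEquivConst_ne_top (hq : 0 < q) (hr : 0 < r) : supEquivConst q r ≠ ∞ := by
  have ha : (2 : ℝ≥0∞) ^ (-(q / r)) < 1 :=
    ENNReal.rpow_lt_one_of_one_lt_of_neg one_lt_two (neg_lt_zero.mpr (div_pos hq hr))
  exact mul_ne_top (ENNReal.rpow_ne_top_of_nonneg (by positivity) ofNat_ne_top)
    (ENNReal.rpow_ne_top_of_nonneg (by positivity)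
      (ENNReal.inv_ne_top.mpr (tsub_pos_of_lt ha).ne'))

variable {x : ℤ → ℝ} {u f : ℝ → ℝ≥0∞}

theorem le_discreteSup (k : ℤ) :
    (2 : ℝ≥0∞) ^ ((k : ℝ) / r) * (∫⁻ s in Ioc (x k) (x (k + 1)), f s) ^ (1 / q)
      ≤ discreteSup q r x f :=
  le_iSup (fun k : ℤ => (2 : ℝ≥0∞) ^ ((k : ℝ) / r) *
    (∫⁻ s in Ioc (x k) (x (k + 1)), f s) ^ (1 / q)) k

theorem le_continuousSup {t : ℝ} (ht : 0 < t) :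
    (∫⁻ s in Ioc 0 t, u s) ^ (1 / r) * (∫⁻ s in Ioi t, f s) ^ (1 / q) ≤ continuousSup q r u f :=
  le_iSup₂ (f := fun t (_ : t ∈ Ioi (0 : ℝ)) =>
    (∫⁻ s in Ioc 0 t, u s) ^ (1 / r) * (∫⁻ s in Ioi t, f s) ^ (1 / q)) t ht

theorem two_rpow_mul_lintegral_Ioc_le_discreteSup_rpow (hq : 0 < q) (j : ℤ) :
    2 ^ ((j : ℝ) * (q / r)) * ∫⁻ s in Ioc (x j) (x (j + 1)), f s ≤ discreteSup q r x f ^ q := by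
  have := rpow_mul_le_rpow_of_mul_rpow_one_div_le hq
    (le_discreteSup (r := r) (x := x) (f := f) j)
  rwa [← ENNReal.rpow_mul, div_mul_eq_mul_div, mul_div_assoc] at this

theorem lintegral_Ioi_le_discreteSup_rpow (hq : 0 < q) (hx : Monotone x)
    (hx_top : Tendsto x atTop atTop) {k : ℤ} {t : ℝ} (ht : x k ≤ t) :
    ∫⁻ s in Ioi t, f s
      ≤ 2 ^ (-((k : ℝ) * (q / r))) * discreteSup q r x f ^ q * (1 - 2 ^ (-(q / r)))⁻¹ :=
  calc ∫⁻ s in Ioi t, f s ≤ ∫⁻ s in Ioi (x k), f s := lintegral_mono_set (Ioi_subset_Ioi ht)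
    _ = ∑' n : ℕ, ∫⁻ s in Ioc (x (k + n)) (x (k + n + 1)), f s := by
        simpa [add_assoc] using lintegral_Ioi_eq_tsum_lintegral_Ioc (g := fun n : ℕ => x (k + n))
          (hx.comp fun _ _ h => by simpa using h)
          (hx_top.comp (tendsto_atTop_add_const_left _ k tendsto_natCast_atTop_atTop)) f
    _ ≤ _ := tsum_nat_add_le_of_two_rpow_mul_le
        (two_rpow_mul_lintegral_Ioc_le_discreteSup_rpow hq) k

theorem rpow_lintegral_Ioc_mul_rpow_lintegral_Ioi_le (hq : 0 < q) (hr : 0 < r) (hx : Monotone x)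
    (hx_top : Tendsto x atTop atTop) {k : ℤ} (hu : ∫⁻ s in Ioc 0 (x (k + 1)), u s ≤ 2 ^ (k + 1))
    {t : ℝ} (ht : t ∈ Ioc (x k) (x (k + 1))) :
    (∫⁻ s in Ioc 0 t, u s) ^ (1 / r) * (∫⁻ s in Ioi t, f s) ^ (1 / q)
      ≤ supEquivConst q r * discreteSup q r x f := by
  set D := discreteSup q r x f
  have hU : (∫⁻ s in Ioc 0 t, u s) ^ (1 / r) ≤ 2 ^ (((k : ℝ) + 1) / r) :=
    calc (∫⁻ s in Ioc 0 t, u s) ^ (1 / r) ≤ (2 ^ (k + 1)) ^ (1 / r) := by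
          gcongr
          exact (lintegral_mono_set (Ioc_subset_Ioc_right ht.2)).trans hu
      _ = 2 ^ (((k : ℝ) + 1) / r) := by
          rw [← ENNReal.rpow_intCast, ← ENNReal.rpow_mul]
          push_cast
          ring_nf
  have hexp : ((k : ℝ) + 1) / r + -((k : ℝ) * (q / r)) * (1 / q) = 1 / r := by
    field_simp
    ring
  calc (∫⁻ s in Ioc 0 t, u s) ^ (1 / r) * (∫⁻ s in Ioi t, f s) ^ (1 / q)
      ≤ 2 ^ (((k : ℝ) + 1) / r) *
          (2 ^ (-((k : ℝ) * (q / r))) * D ^ q * (1 - 2 ^ (-(q / r)))⁻¹) ^ (1 / q) := by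
        gcongr
        exact lintegral_Ioi_le_discreteSup_rpow hq hx hx_top ht.1.le
    _ = supEquivConst q r * D := by
        rw [ENNReal.mul_rpow_of_nonneg _ _ (by positivity),
          ENNReal.mul_rpow_of_nonneg _ _ (by positivity), ← ENNReal.rpow_mul, ← ENNReal.rpow_mul,
          mul_one_div_cancel hq.ne', ENNReal.rpow_one, supEquivConst, ← hexp,
          ENNReal.rpow_add _ _ two_ne_zero ofNat_ne_top]
        ring

theorem continuousSup_le_mul_discreteSup (hq : 0 < q) (hr : 0 < r) (hx : Monotone x)
    (hxu : ∀ k : ℤ, ∫⁻ s in Ioc 0 (x k), u s = 2 ^ k)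
    (hcov : ⋃ k, Ioc (x k) (x (k + 1)) = Ioi 0) :
    continuousSup q r u f ≤ supEquivConst q r * discreteSup q r x f := by
  refine iSup₂_le fun t ht => ?_
  rw [← hcov] at ht
  obtain ⟨k, hk⟩ := mem_iUnion.mp ht
  exact rpow_lintegral_Ioc_mul_rpow_lintegral_Ioi_le hq hr hx
    (tendsto_atTop_of_iUnion_Ioc_eq_Ioi hx hcov) (hxu (k + 1)).le hk

theorem discreteSup_le_continuousSup (hq : 0 < q) (hx_pos : ∀ k, 0 < x k)
    (hxu : ∀ k : ℤ, ∫⁻ s in Ioc 0 (x k), u s = 2 ^ k) :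
    discreteSup q r x f ≤ continuousSup q r u f := by
  refine iSup_le fun k => ?_
  have h2 : (2 : ℝ≥0∞) ^ ((k : ℝ) / r) = (∫⁻ s in Ioc 0 (x k), u s) ^ (1 / r) := by
    rw [hxu, ← ENNReal.rpow_intCast, ← ENNReal.rpow_mul, mul_one_div]
  calc (2 : ℝ≥0∞) ^ ((k : ℝ) / r) * (∫⁻ s in Ioc (x k) (x (k + 1)), f s) ^ (1 / q)
      ≤ (∫⁻ s in Ioc 0 (x k), u s) ^ (1 / r) * (∫⁻ s in Ioi (x k), f s) ^ (1 / q) := by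
        rw [h2]
        gcongr
        exact Ioc_subset_Ioi_self
    _ ≤ continuousSup q r u f := le_continuousSup (hx_pos k)

end

/-- for `r ≥ 1`, non-decreasing weight `v`, and covering sequence
`∫_0^{x_k} u = 2^k`,
`sup_k 2^{k/r} (∫_{x_k}^{x_{k+1}} v^{−q} w)^{1/q} ≈ sup_{t>0} (∫_0^t u)^{1/r} (∫_t^∞ v^{−q} w)^{1/q}`. -/
theorem discrete_sup_equiv_continuous_sup
    (q r : ℝ) (hq : 0 < q) (hr : 1 ≤ r) :
    ∃ c₁ c₂ : ℝ≥0∞, 0 < c₁ ∧ c₂ < ∞ ∧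
      ∀ u v w : ℝ → ℝ≥0∞, IsWeight u → IsWeight v → IsWeight w →
        MonotoneOn v (Set.Ioi 0) →
      ∀ x : ℤ → ℝ, StrictMono x → (∀ k, 0 < x k) →
        (∀ k : ℤ, (∫⁻ t in Set.Ioc 0 (x k), u t) = 2 ^ k) →
        (⋃ k : ℤ, Set.Ioc (x k) (x (k + 1))) = Set.Ioi (0 : ℝ) →
      c₁ * (⨆ t ∈ Set.Ioi (0 : ℝ), (∫⁻ s in Set.Ioc 0 t, u s) ^ (1 / r) *
              (∫⁻ s in Set.Ioi t, v s ^ (-q) * w s) ^ (1 / q))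
          ≤ (⨆ k : ℤ, (2 : ℝ≥0∞) ^ ((k : ℝ) / r) *
              (∫⁻ s in Set.Ioc (x k) (x (k + 1)), v s ^ (-q) * w s) ^ (1 / q)) ∧
        (⨆ k : ℤ, (2 : ℝ≥0∞) ^ ((k : ℝ) / r) *
              (∫⁻ s in Set.Ioc (x k) (x (k + 1)), v s ^ (-q) * w s) ^ (1 / q))
          ≤ c₂ * ⨆ t ∈ Set.Ioi (0 : ℝ), (∫⁻ s in Set.Ioc 0 t, u s) ^ (1 / r) *
              (∫⁻ s in Set.Ioi t, v s ^ (-q) * w s) ^ (1 / q) := by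
  have hr₀ : 0 < r := zero_lt_one.trans_le hr
  refine ⟨(supEquivConst q r)⁻¹, 1, ENNReal.inv_pos.mpr (supEquivConst_ne_top hq hr₀),
    one_lt_top, fun u v w _ _ _ _ x hx hx_pos hxu hcov => ⟨?_, ?_⟩⟩
  · rw [ENNReal.inv_mul_le_iff (supEquivConst_ne_zero hq) (supEquivConst_ne_top hq hr₀)]
    exact continuousSup_le_mul_discreteSup hq hr₀ hx.monotone hxu hcov
  · rw [one_mul]
    exact discreteSup_le_continuousSup hq hx_pos hxu
end

section
/- Let 0 < r < 1, set r' = r/(1−r), let v be a non-decreasing weight, and {x_k} a covering sequence with ∫_0^{x_k} u = 2^k. Then (∑_k 2^{k r'/r} (∫_{x_k}^{x_{k+1}} v(s)^{−q} w(s) ds)^{r'/q})^{1/r'} is equivalent to (∫_0^∞ (∫_0^t u)^{r'} (∫_t^∞ v(s)^{−q} w(s) ds)^{r'/q} u(t) dt)^{1/r'}, with equivalence constants independent of u, v, w. -/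
open MeasureTheory ENNReal Set

/-! On the block `(x_k, x_{k+1}]` of the covering sequence, `2^k ≤ ∫_0^t u ≤ 2^{k+1}` and
`∫_{x_k}^{x_{k+1}} u = 2^k`, so block by block the integral is squeezed between the sums
`∑_k 2^{k r'/r} (∫_{x_{k+1}}^∞ v^{-q} w)^{r'/q}` and
`2^{r'} ∑_k 2^{k r'/r} (∫_{x_k}^∞ v^{-q} w)^{r'/q}` (note `r'/r = r' + 1`).
The first sum dominates the discrete one after an index shift. For the second, the tail
`∫_{x_k}^∞` is the sum of the later block integrals `a_j`, and the discrete Hardy inequality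
`∑_k 2^{kα} (∑_{j ≥ k} a_j)^β ≲ ∑_k 2^{kα} a_k^β` (`α, β > 0`) applies: writing
`a_j = 2^{-(j-k)δ} · 2^{(j-k)δ} a_j` and bounding each `2^{(j-k)δ} a_j` by the `ℓ^β` norm of the
sequence makes the constant a geometric series, and `δ β = α / 2` keeps the double sum summable. -/

namespace ENNReal

lemma two_rpow_add (a b : ℝ) : (2 : ℝ≥0∞) ^ (a + b) = 2 ^ a * 2 ^ b :=
  rpow_add a b two_ne_zero ofNat_ne_top

lemma tsum_two_rpow_neg_mul_ne_top {c : ℝ} (hc : 0 < c) :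
    ∑' n : ℕ, (2 : ℝ≥0∞) ^ (-(n * c)) ≠ ∞ := by
  have hpow : ∀ n : ℕ, (2 : ℝ≥0∞) ^ (-(n * c)) = (2 ^ (-c)) ^ n := fun n => by
    rw [← rpow_natCast, ← rpow_mul, mul_comm, neg_mul]
  simp_rw [hpow, tsum_geometric]
  exact inv_ne_top.mpr (tsub_pos_of_lt (rpow_lt_one_of_one_lt_of_neg one_lt_two (by linarith))).ne'

lemma tsum_mul_rpow_le {ι : Type*} {β : ℝ} (hβ : 0 < β) (c b : ι → ℝ≥0∞) :
    (∑' i, c i * b i) ^ β ≤ (∑' i, c i) ^ β * ∑' i, b i ^ β := by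
  have hb : ∀ i, b i ≤ (∑' j, b j ^ β) ^ β⁻¹ := fun i =>
    (le_rpow_inv_iff hβ).mpr (ENNReal.le_tsum i)
  calc (∑' i, c i * b i) ^ β ≤ ((∑' i, c i) * (∑' j, b j ^ β) ^ β⁻¹) ^ β := by
        rw [← ENNReal.tsum_mul_right]
        exact rpow_le_rpow (ENNReal.tsum_le_tsum fun i => mul_le_mul_right (hb i) _) hβ.le
    _ = (∑' i, c i) ^ β * ∑' i, b i ^ β := by
        rw [mul_rpow_of_nonneg _ _ hβ.le, rpow_inv_rpow hβ.ne']

lemma inv_rpow_mul_rpow_le {a b K : ℝ≥0∞} {e : ℝ} (he : 0 ≤ e) (h : a ≤ K * b) :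
    (K ^ e)⁻¹ * a ^ e ≤ b ^ e :=
  calc (K ^ e)⁻¹ * a ^ e ≤ (K ^ e)⁻¹ * K ^ e * b ^ e := by
        rw [mul_assoc, ← mul_rpow_of_nonneg _ _ he]
        gcongr
    _ ≤ b ^ e := mul_le_of_le_one_left' (ENNReal.inv_mul_le_one _)

end ENNReal

lemma exists_tsum_two_rpow_mul_tsum_tail_rpow_le {α β : ℝ} (hα : 0 < α) (hβ : 0 < β) :
    ∃ C : ℝ≥0∞, C ≠ ∞ ∧ ∀ a : ℤ → ℝ≥0∞,
      ∑' k : ℤ, 2 ^ (k * α) * (∑' n : ℕ, a (k + n)) ^ β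
        ≤ C * ∑' k : ℤ, 2 ^ (k * α) * a k ^ β := by
  set δ := α / (2 * β)
  set G := ∑' n : ℕ, (2 : ℝ≥0∞) ^ (-(n * δ))
  set H := ∑' n : ℕ, (2 : ℝ≥0∞) ^ (-(n * (α / 2)))
  refine ⟨G ^ β * H, mul_ne_top (rpow_ne_top_of_nonneg hβ.le
    (tsum_two_rpow_neg_mul_ne_top (by positivity))) (tsum_two_rpow_neg_mul_ne_top (by positivity)),
    fun a => ?_⟩
  have tail (k : ℤ) : (∑' n : ℕ, a (k + n)) ^ β
      ≤ G ^ β * ∑' n : ℕ, 2 ^ (n * (α / 2)) * a (k + n) ^ β := by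
    calc (∑' n : ℕ, a (k + n)) ^ β
        = (∑' n : ℕ, 2 ^ (-(n * δ)) * (2 ^ (n * δ) * a (k + n))) ^ β := by
          congr 1
          refine tsum_congr fun n => ?_
          rw [← mul_assoc, ← two_rpow_add, neg_add_cancel, rpow_zero, one_mul]
      _ ≤ G ^ β * ∑' n : ℕ, (2 ^ (n * δ) * a (k + n)) ^ β := tsum_mul_rpow_le hβ _ _
      _ = G ^ β * ∑' n : ℕ, 2 ^ (n * (α / 2)) * a (k + n) ^ β := by
          congr 1
          refine tsum_congr fun n => ?_
          rw [mul_rpow_of_nonneg _ _ hβ.le, ← rpow_mul]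
          congr 2
          simp only [δ]
          field_simp
  have shift (n : ℕ) : ∑' k : ℤ, 2 ^ (k * α) * (2 ^ (n * (α / 2)) * a (k + n) ^ β)
      = 2 ^ (-(n * (α / 2))) * ∑' k : ℤ, 2 ^ (k * α) * a k ^ β := by
    rw [← ENNReal.tsum_mul_left, ← (Equiv.addRight (n : ℤ)).tsum_eq
      (fun k => 2 ^ (-(n * (α / 2))) * (2 ^ (k * α) * a k ^ β))]
    refine tsum_congr fun k => ?_
    rw [Equiv.coe_addRight, ← mul_assoc, ← mul_assoc, ← two_rpow_add, ← two_rpow_add]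
    congr 2
    push_cast
    ring
  calc ∑' k : ℤ, 2 ^ (k * α) * (∑' n : ℕ, a (k + n)) ^ β
      ≤ ∑' k : ℤ, 2 ^ (k * α) * (G ^ β * ∑' n : ℕ, 2 ^ (n * (α / 2)) * a (k + n) ^ β) :=
        ENNReal.tsum_le_tsum fun k => mul_le_mul_right (tail k) _
    _ = G ^ β * ∑' n : ℕ, ∑' k : ℤ, 2 ^ (k * α) * (2 ^ (n * (α / 2)) * a (k + n) ^ β) := by
        simp_rw [mul_left_comm _ (G ^ β), ← ENNReal.tsum_mul_left]
        rw [ENNReal.tsum_comm]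
    _ = G ^ β * H * ∑' k : ℤ, 2 ^ (k * α) * a k ^ β := by
        simp_rw [shift, ENNReal.tsum_mul_right, mul_assoc]
        rfl

section CoveringSequence

variable {u : ℝ → ℝ≥0∞} {x : ℤ → ℝ}

lemma lintegral_Ioc_succ_eq_two_zpow (hx : Monotone x) (hx0 : ∀ k, 0 ≤ x k)
    (hU : ∀ k : ℤ, ∫⁻ t in Ioc 0 (x k), u t = 2 ^ k) (k : ℤ) :
    ∫⁻ t in Ioc (x k) (x (k + 1)), u t = 2 ^ k := by
  have hsplit : ∫⁻ t in Ioc 0 (x (k + 1)), u t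
      = (∫⁻ t in Ioc 0 (x k), u t) + ∫⁻ t in Ioc (x k) (x (k + 1)), u t := by
    rw [← Ioc_union_Ioc_eq_Ioc (hx0 k) (hx (by omega)),
      lintegral_union measurableSet_Ioc (Ioc_disjoint_Ioc_of_le le_rfl)]
  rw [hU, hU, ENNReal.zpow_add two_ne_zero ofNat_ne_top, zpow_one, mul_two] at hsplit
  exact ((ENNReal.add_right_inj (zpow_ne_top two_ne_zero ofNat_ne_top k)).mp hsplit).symm

lemma Ioi_eq_iUnion_Ioc_add_nat (hx : Monotone x) (hx0 : ∀ k, 0 ≤ x k)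
    (hcov : ⋃ k : ℤ, Ioc (x k) (x (k + 1)) = Ioi 0) (k : ℤ) :
    Ioi (x k) = ⋃ n : ℕ, Ioc (x (k + n)) (x (k + n + 1)) := by
  ext t
  simp only [mem_Ioi, mem_iUnion]
  constructor
  · intro ht
    have ht0 : t ∈ ⋃ j : ℤ, Ioc (x j) (x (j + 1)) := by rw [hcov]; exact (hx0 k).trans_lt ht
    obtain ⟨j, hj⟩ := mem_iUnion.mp ht0
    have hkj : k ≤ j := by
      by_contra! hjk
      exact (hj.2.trans (hx (by omega))).not_gt ht
    exact ⟨(j - k).toNat, by rwa [Int.toNat_of_nonneg (by omega), add_sub_cancel]⟩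
  · rintro ⟨n, hn⟩
    exact (hx (by omega)).trans_lt hn.1

lemma lintegral_Ioi_eq_tsum_Ioc_add_nat (hx : Monotone x) (hx0 : ∀ k, 0 ≤ x k)
    (hcov : ⋃ k : ℤ, Ioc (x k) (x (k + 1)) = Ioi 0) (f : ℝ → ℝ≥0∞) (k : ℤ) :
    ∫⁻ t in Ioi (x k), f t = ∑' n : ℕ, ∫⁻ t in Ioc (x (k + n)) (x (k + n + 1)), f t := by
  have hdisj : Pairwise (Function.onFun Disjoint fun n : ℕ => Ioc (x (k + n)) (x (k + n + 1))) := by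
    have := (hx.comp (show Monotone fun n : ℕ => k + n from fun m n h => by simp only; omega)
      ).pairwise_disjoint_on_Ioc_succ
    simpa only [Function.comp_def, Order.succ_eq_add_one, Nat.cast_add_one, ← add_assoc] using this
  rw [Ioi_eq_iUnion_Ioc_add_nat hx hx0 hcov k, lintegral_iUnion (fun _ => measurableSet_Ioc) hdisj]

lemma lintegral_Ioi_zero_eq_tsum_Ioc (hx : Monotone x)
    (hcov : ⋃ k : ℤ, Ioc (x k) (x (k + 1)) = Ioi 0) (f : ℝ → ℝ≥0∞) :
    ∫⁻ t in Ioi 0, f t = ∑' k : ℤ, ∫⁻ t in Ioc (x k) (x (k + 1)), f t := by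
  rw [← hcov]
  exact lintegral_iUnion (fun _ => measurableSet_Ioc) hx.pairwise_disjoint_on_Ioc_succ f

variable {g : ℝ → ℝ≥0∞} {p β : ℝ}

lemma lintegral_Ioc_succ_le (hu : Measurable u) (hp : 0 ≤ p) (hβ : 0 ≤ β)
    (hx : Monotone x) (hx0 : ∀ k, 0 ≤ x k) (hU : ∀ k : ℤ, ∫⁻ t in Ioc 0 (x k), u t = 2 ^ k)
    (k : ℤ) :
    ∫⁻ t in Ioc (x k) (x (k + 1)), (∫⁻ s in Ioc 0 t, u s) ^ p * (∫⁻ s in Ioi t, g s) ^ β * u t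
      ≤ 2 ^ p * (2 ^ (k * (p + 1)) * (∫⁻ s in Ioi (x k), g s) ^ β) := by
  calc ∫⁻ t in Ioc (x k) (x (k + 1)), (∫⁻ s in Ioc 0 t, u s) ^ p * (∫⁻ s in Ioi t, g s) ^ β * u t
      ≤ ∫⁻ t in Ioc (x k) (x (k + 1)), 2 ^ ((k + 1) * p) * (∫⁻ s in Ioi (x k), g s) ^ β * u t := by
        refine setLIntegral_mono' measurableSet_Ioc fun t ht => ?_
        have hUt : (∫⁻ s in Ioc 0 t, u s) ^ p ≤ 2 ^ ((k + 1) * p) := by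
          calc (∫⁻ s in Ioc 0 t, u s) ^ p ≤ (∫⁻ s in Ioc 0 (x (k + 1)), u s) ^ p :=
                rpow_le_rpow (lintegral_mono_set (Ioc_subset_Ioc_right ht.2)) hp
            _ = 2 ^ ((k + 1) * p) := by
                rw [hU, ← rpow_intCast, ← rpow_mul]
                push_cast
                rfl
        gcongr
        exact ht.1.le
    _ = 2 ^ ((k + 1) * p) * (∫⁻ s in Ioi (x k), g s) ^ β * 2 ^ (k : ℝ) := by
        rw [lintegral_const_mul _ hu, lintegral_Ioc_succ_eq_two_zpow hx hx0 hU, rpow_intCast]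
    _ = 2 ^ p * (2 ^ (k * (p + 1)) * (∫⁻ s in Ioi (x k), g s) ^ β) := by
        rw [mul_right_comm, ← two_rpow_add, ← mul_assoc, ← two_rpow_add]
        ring_nf

lemma le_lintegral_Ioc_succ (hp : 0 ≤ p) (hβ : 0 ≤ β)
    (hx : Monotone x) (hx0 : ∀ k, 0 ≤ x k) (hU : ∀ k : ℤ, ∫⁻ t in Ioc 0 (x k), u t = 2 ^ k)
    (k : ℤ) :
    2 ^ (k * (p + 1)) * (∫⁻ s in Ioi (x (k + 1)), g s) ^ β
      ≤ ∫⁻ t in Ioc (x k) (x (k + 1)),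
          (∫⁻ s in Ioc 0 t, u s) ^ p * (∫⁻ s in Ioi t, g s) ^ β * u t := by
  calc 2 ^ (k * (p + 1)) * (∫⁻ s in Ioi (x (k + 1)), g s) ^ β
      = 2 ^ (k * p) * (∫⁻ s in Ioi (x (k + 1)), g s) ^ β * ∫⁻ t in Ioc (x k) (x (k + 1)), u t := by
        rw [lintegral_Ioc_succ_eq_two_zpow hx hx0 hU, ← rpow_intCast, mul_right_comm,
          ← two_rpow_add]
        ring_nf
    _ ≤ ∫⁻ t in Ioc (x k) (x (k + 1)), 2 ^ (k * p) * (∫⁻ s in Ioi (x (k + 1)), g s) ^ β * u t :=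
        lintegral_const_mul_le _ _
    _ ≤ _ := by
        refine setLIntegral_mono' measurableSet_Ioc fun t ht => ?_
        have hUt : 2 ^ (k * p) ≤ (∫⁻ s in Ioc 0 t, u s) ^ p := by
          calc (2 : ℝ≥0∞) ^ (k * p) = (∫⁻ s in Ioc 0 (x k), u s) ^ p := by
                rw [hU, ← rpow_intCast, ← rpow_mul]
            _ ≤ (∫⁻ s in Ioc 0 t, u s) ^ p :=
                rpow_le_rpow (lintegral_mono_set (Ioc_subset_Ioc_right ht.1.le)) hp
        gcongr
        exact ht.2

lemma lintegral_Ioi_zero_le_mul_tsum (hu : Measurable u) (hp : 0 ≤ p) (hβ : 0 ≤ β)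
    (hx : Monotone x) (hx0 : ∀ k, 0 ≤ x k) (hU : ∀ k : ℤ, ∫⁻ t in Ioc 0 (x k), u t = 2 ^ k)
    (hcov : ⋃ k : ℤ, Ioc (x k) (x (k + 1)) = Ioi 0) {C : ℝ≥0∞}
    (hC : ∀ a : ℤ → ℝ≥0∞, ∑' k : ℤ, 2 ^ (k * (p + 1)) * (∑' n : ℕ, a (k + n)) ^ β
      ≤ C * ∑' k : ℤ, 2 ^ (k * (p + 1)) * a k ^ β) :
    ∫⁻ t in Ioi 0, (∫⁻ s in Ioc 0 t, u s) ^ p * (∫⁻ s in Ioi t, g s) ^ β * u t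
      ≤ 2 ^ p * C * ∑' k : ℤ, 2 ^ (k * (p + 1)) * (∫⁻ s in Ioc (x k) (x (k + 1)), g s) ^ β :=
  calc ∫⁻ t in Ioi 0, (∫⁻ s in Ioc 0 t, u s) ^ p * (∫⁻ s in Ioi t, g s) ^ β * u t
      ≤ 2 ^ p * ∑' k : ℤ, 2 ^ (k * (p + 1)) * (∫⁻ s in Ioi (x k), g s) ^ β := by
        rw [lintegral_Ioi_zero_eq_tsum_Ioc hx hcov, ← ENNReal.tsum_mul_left]
        exact ENNReal.tsum_le_tsum (lintegral_Ioc_succ_le hu hp hβ hx hx0 hU)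
    _ ≤ 2 ^ p * (C * ∑' k : ℤ, 2 ^ (k * (p + 1)) * (∫⁻ s in Ioc (x k) (x (k + 1)), g s) ^ β) := by
        simp_rw [lintegral_Ioi_eq_tsum_Ioc_add_nat hx hx0 hcov]
        gcongr
        exact hC _
    _ = _ := (mul_assoc _ _ _).symm

lemma tsum_le_two_rpow_mul_lintegral_Ioi_zero (hp : 0 ≤ p) (hβ : 0 ≤ β)
    (hx : Monotone x) (hx0 : ∀ k, 0 ≤ x k) (hU : ∀ k : ℤ, ∫⁻ t in Ioc 0 (x k), u t = 2 ^ k)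
    (hcov : ⋃ k : ℤ, Ioc (x k) (x (k + 1)) = Ioi 0) :
    ∑' k : ℤ, 2 ^ (k * (p + 1)) * (∫⁻ s in Ioc (x k) (x (k + 1)), g s) ^ β
      ≤ 2 ^ (p + 1) *
          ∫⁻ t in Ioi 0, (∫⁻ s in Ioc 0 t, u s) ^ p * (∫⁻ s in Ioi t, g s) ^ β * u t := by
  rw [lintegral_Ioi_zero_eq_tsum_Ioc hx hcov, ← ENNReal.tsum_mul_left,
    ← (Equiv.addRight (1 : ℤ)).tsum_eq]
  refine ENNReal.tsum_le_tsum fun k => ?_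
  calc 2 ^ (((k + 1 : ℤ) : ℝ) * (p + 1)) * (∫⁻ s in Ioc (x (k + 1)) (x (k + 1 + 1)), g s) ^ β
      ≤ 2 ^ (((k + 1 : ℤ) : ℝ) * (p + 1)) * (∫⁻ s in Ioi (x (k + 1)), g s) ^ β := by
        gcongr
        exact Ioc_subset_Ioi_self
    _ = 2 ^ (p + 1) * (2 ^ (k * (p + 1)) * (∫⁻ s in Ioi (x (k + 1)), g s) ^ β) := by
        rw [← mul_assoc, ← two_rpow_add]
        push_cast
        ring_nf
    _ ≤ _ := by
        gcongr
        exact le_lintegral_Ioc_succ hp hβ hx hx0 hU k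

end CoveringSequence

/-- for `0 < r < 1`, `r' = r/(1−r)`, non-decreasing weight `v` and
covering sequence `∫_0^{x_k} u = 2^k`,
`(∑_k 2^{k r'/r} (∫_{x_k}^{x_{k+1}} v^{−q} w)^{r'/q})^{1/r'}
  ≈ (∫_0^∞ (∫_0^t u)^{r'} (∫_t^∞ v^{−q} w)^{r'/q} u(t) dt)^{1/r'}`. -/
theorem discrete_sum_equiv_continuous_integral
    (q r : ℝ) (hq : 0 < q) (hr0 : 0 < r) (hr1 : r < 1) :
    ∃ c₁ c₂ : ℝ≥0∞, 0 < c₁ ∧ c₂ < ∞ ∧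
      ∀ u v w : ℝ → ℝ≥0∞, IsWeight u → IsWeight v → IsWeight w →
        MonotoneOn v (Set.Ioi 0) →
      ∀ x : ℤ → ℝ, StrictMono x → (∀ k, 0 < x k) →
        (∀ k : ℤ, (∫⁻ t in Set.Ioc 0 (x k), u t) = 2 ^ k) →
        (⋃ k : ℤ, Set.Ioc (x k) (x (k + 1))) = Set.Ioi (0 : ℝ) →
      c₁ * (∫⁻ t in Set.Ioi (0 : ℝ),
              (∫⁻ s in Set.Ioc 0 t, u s) ^ (r / (1 - r)) *
              (∫⁻ s in Set.Ioi t, v s ^ (-q) * w s) ^ ((r / (1 - r)) / q) *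
              u t) ^ ((1 - r) / r)
          ≤ (∑' k : ℤ, (2 : ℝ≥0∞) ^ (((k : ℝ) * (r / (1 - r))) / r) *
              (∫⁻ s in Set.Ioc (x k) (x (k + 1)), v s ^ (-q) * w s) ^ ((r / (1 - r)) / q)
            ) ^ ((1 - r) / r) ∧
        (∑' k : ℤ, (2 : ℝ≥0∞) ^ (((k : ℝ) * (r / (1 - r))) / r) *
              (∫⁻ s in Set.Ioc (x k) (x (k + 1)), v s ^ (-q) * w s) ^ ((r / (1 - r)) / q)
            ) ^ ((1 - r) / r)
          ≤ c₂ * (∫⁻ t in Set.Ioi (0 : ℝ),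
              (∫⁻ s in Set.Ioc 0 t, u s) ^ (r / (1 - r)) *
              (∫⁻ s in Set.Ioi t, v s ^ (-q) * w s) ^ ((r / (1 - r)) / q) *
              u t) ^ ((1 - r) / r) := by
  have h1r : 0 < 1 - r := by linarith
  set p := r / (1 - r) with hp
  have hp0 : 0 < p := div_pos hr0 h1r
  have hpr : p / r = p + 1 := by rw [hp]; field_simp; ring
  set e := (1 - r) / r
  have he : 0 < e := div_pos h1r hr0
  have hβ : 0 < p / q := div_pos hp0 hq
  obtain ⟨C, hC, hardy⟩ := exists_tsum_two_rpow_mul_tsum_tail_rpow_le (α := p + 1) (by linarith) hβ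
  have hK : (2 ^ p * C) ^ e ≠ ∞ := rpow_ne_top_of_nonneg he.le (mul_ne_top (by simp) hC)
  refine ⟨((2 ^ p * C) ^ e)⁻¹, 2 ^ ((p + 1) * e), ENNReal.inv_pos.mpr hK,
    rpow_lt_top_of_nonneg (by positivity) ofNat_ne_top, ?_⟩
  intro u v w hu _ _ _ x hx hx0 hU hcov
  simp_rw [mul_div_assoc, hpr]
  have hx0' : ∀ k, 0 ≤ x k := fun k => (hx0 k).le
  refine ⟨inv_rpow_mul_rpow_le he.le
    (lintegral_Ioi_zero_le_mul_tsum hu.1 hp0.le hβ.le hx.monotone hx0' hU hcov hardy),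
    (rpow_le_rpow (tsum_le_two_rpow_mul_lintegral_Ioi_zero hp0.le hβ.le hx.monotone hx0' hU hcov)
      he.le).trans_eq ?_⟩
  rw [mul_rpow_of_nonneg _ _ he.le, ← rpow_mul]
end
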